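/- arXiv:2212.05257 — 4 statements merged into one kernel-verified Lean document; each statement's English description precedes it below -/
import Mathlib

section
/- Fix Υ > 0 and let g_n, g ∈ S^Υ be such that ∫_{Z_T} φ g_n dν_T → ∫_{Z_T} φ g dν_T for every continuous function φ : Z_T → ℝ with compact support. Then lim_{n→∞} ∫_{Z_T} h(s,z)(g_n(s,z) − 1) ν(dz) ds = ∫_{Z_T} h(s,z)(g(s,z) − 1) ν(dz) ds. -/
/-!
Young's inequality for `ℓ`, whose Legendre dual is `a ↦ e^a - 1 - a`, gives
`|a| |r - 1| ≤ ℓ(r)/σ + σ a² e^{σ|a|}` for every `σ > 0`. Hence, for every `g ∈ S^Υ`,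
`∫ |h - φ| |g - 1| ≤ Υ/σ + ∫ σ (h - φ)² e^{σ|h - φ|}`, uniformly in `g`. Take `σ` large, and then
`φ` continuous with compact support: an `L²`-approximation of `h` truncated at a high level `c`,
where the exponential integrability of `h` makes the contribution of `{|h| > c}` small. Then
`∫ h (g - 1)` is uniformly close to `∫ φ g - ∫ φ`, and `∫ φ g_n → ∫ φ g` by assumption.
-/

open MeasureTheory Filter Topology
open scoped ENNReal

/-- The measure `λ_T ⊗ ν` on `Z_T = [0,T] × Z`. -/
noncomputable def nuT {Z : Type*} [MeasurableSpace Z] (T : ℝ) (ν : Measure Z) :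
    Measure (ℝ × Z) := (volume.restrict (Set.Icc 0 T)).prod ν

/-- The set `S^Υ` of nonnegative measurable functions `g` on `(Z_T, ν_T)` with
`∫ ℓ(g) dν_T ≤ Υ`, where `ℓ(r) = r log r − r + 1`. -/
def entS {X : Type*} [MeasurableSpace X] (μ : Measure X) (Υ : ℝ) : Set (X → ℝ) :=
  {g | Measurable g ∧ (∀ x, 0 ≤ g x) ∧
    ∫⁻ x, ENNReal.ofReal (g x * Real.log (g x) - g x + 1) ∂μ ≤ ENNReal.ofReal Υ}

noncomputable def ell (r : ℝ) : ℝ := r * Real.log r - r + 1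

lemma mul_sub_one_le_ell_add (a r : ℝ) (hr : 0 ≤ r) :
    a * (r - 1) ≤ ell r + (Real.exp a - 1 - a) := by
  unfold ell
  rcases hr.eq_or_lt with rfl | hr
  · simp only [Real.log_zero, mul_zero]
    linarith [Real.exp_pos a]
  · -- tangent line of `exp` at `log r`
    have := Real.add_one_le_exp (a - Real.log r)
    rw [Real.exp_sub, Real.exp_log hr, le_div_iff₀ hr] at this
    nlinarith

lemma ell_nonneg {r : ℝ} (hr : 0 ≤ r) : 0 ≤ ell r := by
  simpa using mul_sub_one_le_ell_add 0 r hr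

lemma exp_sub_one_sub_le_sq_mul_exp_abs (y : ℝ) :
    Real.exp y - 1 - y ≤ y ^ 2 * Real.exp |y| := by
  have hpos := Real.exp_pos y
  have hneg := Real.add_one_le_exp (-y)
  have hmul : Real.exp y * Real.exp (-y) = 1 := by rw [← Real.exp_add]; simp
  rcases le_total 0 y with hy | hy
  · rw [abs_of_nonneg hy]
    have : Real.exp y - 1 ≤ y * Real.exp y := by nlinarith
    nlinarith
  · rw [abs_of_nonpos hy]
    have := Real.add_one_le_exp y
    have : 1 ≤ Real.exp (-y) := Real.one_le_exp (by linarith)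
    nlinarith

lemma abs_mul_abs_sub_one_le {σ : ℝ} (hσ : 0 < σ) (a : ℝ) {r : ℝ} (hr : 0 ≤ r) :
    |a| * |r - 1| ≤ ell r / σ + σ * a ^ 2 * Real.exp (σ * |a|) := by
  have key : ∀ b, |b| = |a| → σ * b * (r - 1) ≤ ell r + σ ^ 2 * a ^ 2 * Real.exp (σ * |a|) := by
    intro b hb
    have h1 := mul_sub_one_le_ell_add (σ * b) r hr
    have h2 := exp_sub_one_sub_le_sq_mul_exp_abs (σ * b)
    rw [abs_mul, abs_of_pos hσ, hb, mul_pow, ← sq_abs b, hb, sq_abs] at h2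
    linarith
  rw [div_add' _ _ _ hσ.ne', le_div_iff₀ hσ]
  rcases abs_cases (r - 1) with ⟨h, -⟩ | ⟨h, -⟩
  · rw [h]; nlinarith [key |a| (abs_abs a)]
  · rw [h]; nlinarith [key (-|a|) (by simp)]

lemma sq_mul_exp_le {σ : ℝ} (hσ : 0 < σ) {x : ℝ} (hx : 0 ≤ x) :
    σ * x ^ 2 * Real.exp (σ * x) ≤ Real.exp (3 * (σ * x)) / σ := by
  have h1 : σ * x ≤ Real.exp (σ * x) := by linarith [Real.add_one_le_exp (σ * x)]
  have h2 : (σ * x) ^ 2 ≤ Real.exp (σ * x) ^ 2 := pow_le_pow_left₀ (by positivity) h1 2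
  rw [le_div_iff₀ hσ, show 3 * (σ * x) = σ * x + σ * x + σ * x by ring, Real.exp_add, Real.exp_add]
  nlinarith [Real.exp_pos (σ * x)]

lemma abs_sub_clamp_le {c x : ℝ} (hx : |x| ≤ c) (y : ℝ) :
    |x - max (-c) (min c y)| ≤ |x - y| := by
  have hx' : max (-c) (min c x) = x := by
    rw [min_eq_right (le_abs_self x |>.trans hx), max_eq_right (neg_le_of_abs_le hx)]
  calc |x - max (-c) (min c y)| = |max (min c x) (-c) - max (min c y) (-c)| := by
        nth_rewrite 1 [← hx']
        rw [max_comm (-c), max_comm (-c)]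
    _ ≤ |min c x - min c y| := abs_max_sub_max_le_abs _ _ _
    _ ≤ |x - y| := by simpa using abs_min_sub_min_le_max c x c y

lemma tendsto_of_forall_dist_le {ι α : Type*} [PseudoMetricSpace α] {l : Filter ι}
    {u : ι → α} {a : α}
    (H : ∀ ε > 0, ∃ v : ι → α, ∃ b, Tendsto v l (𝓝 b) ∧ (∀ i, dist (u i) (v i) ≤ ε) ∧
      dist a b ≤ ε) :
    Tendsto u l (𝓝 a) := by
  refine Metric.tendsto_nhds.2 fun ε hε => ?_
  obtain ⟨v, b, hv, huv, hab⟩ := H (ε / 3) (by positivity)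
  filter_upwards [Metric.tendsto_nhds.1 hv (ε / 3) (by positivity)] with i hi
  calc dist (u i) a ≤ dist (u i) (v i) + dist (v i) b + dist b a := dist_triangle4 _ _ _ _
    _ < ε := by linarith [dist_comm a b, huv i]

section EntropyBall

variable {X : Type*} [MeasurableSpace X] {μ : Measure X} {Υ : ℝ} {g : X → ℝ}

lemma integrableOn_of_mem_entS (hg : g ∈ entS μ Υ) {K : Set X} (hK : μ K < ∞) :
    IntegrableOn g K μ := by
  obtain ⟨hgm, hg0, hgΥ⟩ := hg
  refine ⟨hgm.aestronglyMeasurable, (hasFiniteIntegral_iff_ofReal (ae_of_all _ hg0)).2 ?_⟩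
  have hpt : ∀ x, ENNReal.ofReal (g x) ≤
      ENNReal.ofReal (ell (g x)) + ENNReal.ofReal (Real.exp 1 - 1) := fun x => by
    rw [← ENNReal.ofReal_add (ell_nonneg (hg0 x)) (by linarith [Real.add_one_le_exp 1])]
    exact ENNReal.ofReal_le_ofReal (by linarith [mul_sub_one_le_ell_add 1 (g x) (hg0 x)])
  calc ∫⁻ x in K, ENNReal.ofReal (g x) ∂μ
      ≤ ∫⁻ x in K, (ENNReal.ofReal (ell (g x)) + ENNReal.ofReal (Real.exp 1 - 1)) ∂μ :=
        lintegral_mono hpt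
    _ = ∫⁻ x in K, ENNReal.ofReal (ell (g x)) ∂μ + ENNReal.ofReal (Real.exp 1 - 1) * μ K := by
        rw [lintegral_add_right _ measurable_const, setLIntegral_const]
    _ ≤ ENNReal.ofReal Υ + ENNReal.ofReal (Real.exp 1 - 1) * μ K := by
        gcongr
        exact (setLIntegral_le_lintegral _ _).trans hgΥ
    _ < ∞ := ENNReal.add_lt_top.2
        ⟨ENNReal.ofReal_lt_top, ENNReal.mul_lt_top ENNReal.ofReal_lt_top hK⟩

lemma integrable_mul_of_mem_entS [TopologicalSpace X] [OpensMeasurableSpace X]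
    [IsFiniteMeasureOnCompacts μ] (hg : g ∈ entS μ Υ) {φ : X → ℝ} (hφ : Continuous φ)
    (hφc : HasCompactSupport φ) :
    Integrable (fun x => φ x * g x) μ :=
  ((integrableOn_of_mem_entS hg hφc.measure_lt_top).continuousOn_mul_of_subset
    hφ.continuousOn hφc (isClosed_tsupport φ).measurableSet subset_rfl
    ).integrable_of_forall_notMem_eq_zero fun x hx => by
      simp [image_eq_zero_of_notMem_tsupport hx]

lemma lintegral_abs_mul_abs_sub_one_le (hg : g ∈ entS μ Υ) {σ : ℝ} (hσ : 0 < σ) (f : X → ℝ) :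
    ∫⁻ x, ENNReal.ofReal (|f x| * |g x - 1|) ∂μ ≤
      ENNReal.ofReal (Υ / σ) + ∫⁻ x, ENNReal.ofReal (σ * f x ^ 2 * Real.exp (σ * |f x|)) ∂μ := by
  obtain ⟨hgm, hg0, hgΥ⟩ := hg
  have hℓm : Measurable fun x => ENNReal.ofReal (ell (g x)) :=
    ((hgm.mul (Real.measurable_log.comp hgm)).sub hgm |>.add_const 1).ennreal_ofReal
  calc ∫⁻ x, ENNReal.ofReal (|f x| * |g x - 1|) ∂μ
      ≤ ∫⁻ x, (ENNReal.ofReal σ⁻¹ * ENNReal.ofReal (ell (g x))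
          + ENNReal.ofReal (σ * f x ^ 2 * Real.exp (σ * |f x|))) ∂μ := by
        refine lintegral_mono fun x => ?_
        rw [← ENNReal.ofReal_mul (by positivity),
          ← ENNReal.ofReal_add (mul_nonneg (by positivity) (ell_nonneg (hg0 x))) (by positivity)]
        refine ENNReal.ofReal_le_ofReal ?_
        simpa only [div_eq_inv_mul] using abs_mul_abs_sub_one_le hσ (f x) (hg0 x)
    _ = ENNReal.ofReal σ⁻¹ * ∫⁻ x, ENNReal.ofReal (ell (g x)) ∂μ
          + ∫⁻ x, ENNReal.ofReal (σ * f x ^ 2 * Real.exp (σ * |f x|)) ∂μ := by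
        rw [lintegral_add_left (hℓm.const_mul _), lintegral_const_mul' _ _ ENNReal.ofReal_ne_top]
    _ ≤ ENNReal.ofReal (Υ / σ) + ∫⁻ x, ENNReal.ofReal (σ * f x ^ 2 * Real.exp (σ * |f x|)) ∂μ := by
        rw [div_eq_inv_mul, ENNReal.ofReal_mul (by positivity)]
        gcongr
        exact hgΥ

lemma abs_integral_mul_sub_one_sub_le [TopologicalSpace X] [OpensMeasurableSpace X]
    [IsFiniteMeasureOnCompacts μ] (hg : g ∈ entS μ Υ) {h φ : X → ℝ} (hh : Measurable h)
    (hφ : Continuous φ) (hφc : HasCompactSupport φ) {ε : ℝ} (hε : 0 ≤ ε)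
    (hhφ : ∫⁻ x, ENNReal.ofReal (|h x - φ x| * |g x - 1|) ∂μ ≤ ENNReal.ofReal ε) :
    |∫ x, h x * (g x - 1) ∂μ - (∫ x, φ x * g x ∂μ - ∫ x, φ x ∂μ)| ≤ ε := by
  have hnorm : ∀ x, ENNReal.ofReal ‖(h x - φ x) * (g x - 1)‖ =
      ENNReal.ofReal (|h x - φ x| * |g x - 1|) := fun x => by rw [Real.norm_eq_abs, abs_mul]
  have hint : Integrable (fun x => (h x - φ x) * (g x - 1)) μ := by
    refine ⟨((hh.sub hφ.measurable).mul (hg.1.sub_const 1)).aestronglyMeasurable, ?_⟩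
    rw [hasFiniteIntegral_iff_norm, lintegral_congr hnorm]
    exact hhφ.trans_lt ENNReal.ofReal_lt_top
  have hφg := integrable_mul_of_mem_entS hg hφ hφc
  have hφi : Integrable φ μ := hφ.integrable_of_hasCompactSupport hφc
  have hsplit : ∫ x, h x * (g x - 1) ∂μ =
      ∫ x, (h x - φ x) * (g x - 1) ∂μ + (∫ x, φ x * g x ∂μ - ∫ x, φ x ∂μ) := by
    rw [← integral_sub hφg hφi, ← integral_add hint]
    · congr 1 with x
      ring
    exact hφg.sub hφi
  rw [hsplit, add_sub_cancel_right]
  calc |∫ x, (h x - φ x) * (g x - 1) ∂μ|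
      ≤ (∫⁻ x, ENNReal.ofReal ‖(h x - φ x) * (g x - 1)‖ ∂μ).toReal :=
        (Real.norm_eq_abs _).symm.trans_le (norm_integral_le_lintegral_norm _)
    _ ≤ ε := by
        rw [lintegral_congr hnorm]
        exact ENNReal.toReal_le_of_le_ofReal hε hhφ

end EntropyBall

section Approximation

variable {X : Type*} [MeasurableSpace X] {μ : Measure X} {h : X → ℝ}

lemma memLp_two_of_lintegral_sq_lt_top (hh : Measurable h)
    (hL2 : ∫⁻ x, ENNReal.ofReal (|h x| ^ 2) ∂μ < ∞) : MemLp h 2 μ :=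
  (memLp_two_iff_integrable_sq hh.aestronglyMeasurable).2
    ⟨(hh.pow_const 2).aestronglyMeasurable,
      (hasFiniteIntegral_iff_ofReal (ae_of_all _ fun x => sq_nonneg (h x))).2
        (by simpa only [sq_abs] using hL2)⟩

lemma measure_one_lt_abs_lt_top (hh : Measurable h)
    (hL2 : ∫⁻ x, ENNReal.ofReal (|h x| ^ 2) ∂μ < ∞) : μ {x | 1 < |h x|} < ∞ := by
  have hm : MeasurableSet {x | 1 < |h x|} := measurableSet_lt measurable_const hh.abs
  calc μ {x | 1 < |h x|} = ∫⁻ _ in {x | 1 < |h x|}, 1 ∂μ := (setLIntegral_one _).symm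
    _ ≤ ∫⁻ x in {x | 1 < |h x|}, ENNReal.ofReal (|h x| ^ 2) ∂μ :=
        setLIntegral_mono' hm fun x (hx : 1 < |h x|) =>
          ENNReal.one_le_ofReal.2 (one_le_pow₀ hx.le)
    _ ≤ ∫⁻ x, ENNReal.ofReal (|h x| ^ 2) ∂μ := setLIntegral_le_lintegral _ _
    _ < ∞ := hL2

lemma setLIntegral_sq_mul_exp_le_of_abs_le {σ c : ℝ} (hσ : 0 < σ) (hh : Measurable h)
    {φ φ₀ : X → ℝ} (hφ : ∀ x, |φ x| ≤ c)
    (hφφ₀ : ∀ x, |h x| ≤ c → |h x - φ x| ≤ |h x - φ₀ x|) :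
    ∫⁻ x in {x | |h x| ≤ c}, ENNReal.ofReal (σ * (h x - φ x) ^ 2 * Real.exp (σ * |h x - φ x|)) ∂μ
      ≤ ENNReal.ofReal (σ * Real.exp (σ * (2 * c))) *
        ∫⁻ x, ENNReal.ofReal ((h x - φ₀ x) ^ 2) ∂μ := by
  have hm : MeasurableSet {x | |h x| ≤ c} := measurableSet_le hh.abs measurable_const
  rw [← lintegral_const_mul' _ _ ENNReal.ofReal_ne_top]
  refine (setLIntegral_mono' hm fun x (hx : |h x| ≤ c) => ?_).trans (setLIntegral_le_lintegral _ _)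
  rw [← ENNReal.ofReal_mul (by positivity)]
  refine ENNReal.ofReal_le_ofReal ?_
  have hsq : (h x - φ x) ^ 2 ≤ (h x - φ₀ x) ^ 2 := sq_le_sq.2 (hφφ₀ x hx)
  have hexp : Real.exp (σ * |h x - φ x|) ≤ Real.exp (σ * (2 * c)) := by
    gcongr
    linarith [abs_sub (h x) (φ x), hφ x]
  calc σ * (h x - φ x) ^ 2 * Real.exp (σ * |h x - φ x|)
      ≤ σ * (h x - φ₀ x) ^ 2 * Real.exp (σ * (2 * c)) := by gcongr
    _ = σ * Real.exp (σ * (2 * c)) * (h x - φ₀ x) ^ 2 := by ring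

lemma setLIntegral_sq_mul_exp_le_of_lt_abs {σ c : ℝ} (hσ : 0 < σ) (hc : 1 ≤ c) (hh : Measurable h)
    {φ : X → ℝ} (hφ : ∀ x, |φ x| ≤ c) :
    ∫⁻ x in {x | c < |h x|}, ENNReal.ofReal (σ * (h x - φ x) ^ 2 * Real.exp (σ * |h x - φ x|)) ∂μ
      ≤ ENNReal.ofReal (Real.exp (-(σ * c)) / σ) *
        ∫⁻ x in {x | 1 < |h x|}, ENNReal.ofReal (Real.exp (7 * σ * |h x|)) ∂μ := by
  have hm : MeasurableSet {x | c < |h x|} := measurableSet_lt measurable_const hh.abs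
  have hsub : {x | c < |h x|} ⊆ {x | 1 < |h x|} := fun x (hx : c < |h x|) => hc.trans_lt hx
  rw [← lintegral_const_mul' _ _ ENNReal.ofReal_ne_top]
  refine (setLIntegral_mono' hm fun x (hx : c < |h x|) => ?_).trans (lintegral_mono_set hsub)
  rw [← ENNReal.ofReal_mul (by positivity)]
  refine ENNReal.ofReal_le_ofReal ?_
  have hdiff : |h x - φ x| ≤ 2 * |h x| := by linarith [abs_sub (h x) (φ x), hφ x]
  -- `|h - φ| ≤ 2|h|`, and on `{c < |h|}` the spare factor `e^{-σ|h|}` is at most `e^{-σc}`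
  calc σ * (h x - φ x) ^ 2 * Real.exp (σ * |h x - φ x|)
      = σ * |h x - φ x| ^ 2 * Real.exp (σ * |h x - φ x|) := by rw [sq_abs]
    _ ≤ Real.exp (3 * (σ * |h x - φ x|)) / σ := sq_mul_exp_le hσ (abs_nonneg _)
    _ ≤ Real.exp (-(σ * |h x|) + 7 * σ * |h x|) / σ := by gcongr; nlinarith
    _ ≤ Real.exp (-(σ * c) + 7 * σ * |h x|) / σ := by gcongr
    _ = Real.exp (-(σ * c)) / σ * Real.exp (7 * σ * |h x|) := by rw [Real.exp_add]; ring

variable [TopologicalSpace X] [NormalSpace X] [R1Space X] [WeaklyLocallyCompactSpace X]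
  [BorelSpace X] [μ.Regular]

lemma MeasureTheory.MemLp.exists_hasCompactSupport_lintegral_sq_sub_le (hh : MemLp h 2 μ) {η : ℝ}
    (hη : 0 < η) :
    ∃ φ : X → ℝ, Continuous φ ∧ HasCompactSupport φ ∧
      ∫⁻ x, ENNReal.ofReal ((h x - φ x) ^ 2) ∂μ ≤ ENNReal.ofReal η := by
  obtain ⟨φ, hφc, hhφ, hφ, -⟩ := hh.exists_hasCompactSupport_eLpNorm_sub_le ENNReal.ofNat_ne_top
    (ENNReal.ofReal_pos.2 (Real.sqrt_pos.2 hη)).ne'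
  refine ⟨φ, hφ, hφc, ?_⟩
  have hpow := eLpNorm_nnreal_pow_eq_lintegral (f := h - φ) (μ := μ) (p := 2) two_ne_zero
  simp only [ENNReal.coe_ofNat, NNReal.coe_ofNat, Pi.sub_apply] at hpow
  calc ∫⁻ x, ENNReal.ofReal ((h x - φ x) ^ 2) ∂μ = ∫⁻ x, ‖h x - φ x‖ₑ ^ (2 : ℝ) ∂μ := by
        congr 1 with x
        rw [Real.enorm_eq_ofReal_abs, ENNReal.ofReal_rpow_of_nonneg (abs_nonneg _) zero_le_two,
          Real.rpow_two, sq_abs]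
    _ = eLpNorm (h - φ) 2 μ ^ (2 : ℝ) := hpow.symm
    _ ≤ ENNReal.ofReal (Real.sqrt η) ^ (2 : ℝ) := by gcongr
    _ = ENNReal.ofReal η := by
        rw [ENNReal.ofReal_rpow_of_nonneg (Real.sqrt_nonneg η) zero_le_two, Real.rpow_two,
          Real.sq_sqrt hη.le]

lemma exists_hasCompactSupport_lintegral_sq_mul_exp_sub_le (hh : Measurable h)
    (hL2 : ∫⁻ x, ENNReal.ofReal (|h x| ^ 2) ∂μ < ∞)
    (hexp : ∀ δ > (0:ℝ), ∀ K : Set X, MeasurableSet K → μ K < ∞ →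
      ∫⁻ x in K, ENNReal.ofReal (Real.exp (δ * |h x|)) ∂μ < ∞)
    {σ ε : ℝ} (hσ : 0 < σ) (hε : 0 < ε) :
    ∃ φ : X → ℝ, Continuous φ ∧ HasCompactSupport φ ∧
      ∫⁻ x, ENNReal.ofReal (σ * (h x - φ x) ^ 2 * Real.exp (σ * |h x - φ x|)) ∂μ ≤
        ENNReal.ofReal ε := by
  set C₀ := ∫⁻ x in {x | 1 < |h x|}, ENNReal.ofReal (Real.exp (7 * σ * |h x|)) ∂μ
  have hC₀ : C₀ ≠ ∞ := (hexp (7 * σ) (by positivity) _ (measurableSet_lt measurable_const hh.abs)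
    (measure_one_lt_abs_lt_top hh hL2)).ne
  have htail :
      Tendsto (fun c : ℝ => ENNReal.ofReal (Real.exp (-(σ * c)) / σ) * C₀) atTop (𝓝 0) := by
    have : Tendsto (fun c : ℝ => Real.exp (-(σ * c)) / σ) atTop (𝓝 0) := by
      simpa using (Real.tendsto_exp_neg_atTop_nhds_zero.comp
        (tendsto_id.const_mul_atTop hσ)).div_const σ
    simpa using ENNReal.Tendsto.mul_const (ENNReal.tendsto_ofReal this) (Or.inr hC₀)
  obtain ⟨c, hc1, hc⟩ := ((eventually_ge_atTop 1).and
    (htail.eventually (gt_mem_nhds (ENNReal.ofReal_pos.2 (half_pos hε))))).exists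
  set η := ε / 2 / (σ * Real.exp (σ * (2 * c)))
  obtain ⟨φ₀, hφ₀, hφ₀c, hhφ₀⟩ := (memLp_two_of_lintegral_sq_lt_top hh hL2
    ).exists_hasCompactSupport_lintegral_sq_sub_le (η := η) (by positivity)
  -- truncate `φ₀` at height `c`: this only moves it closer to `h` where `|h| ≤ c`
  set φ : X → ℝ := fun x => max (-c) (min c (φ₀ x))
  have hφ : ∀ x, |φ x| ≤ c := fun x =>
    abs_le.2 ⟨le_max_left _ _, max_le (by linarith) (min_le_left _ _)⟩
  have hclamp0 : max (-c) (min c 0) = 0 := by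
    rw [min_eq_right (by linarith), max_eq_right (by linarith)]
  refine ⟨φ, by fun_prop, hφ₀c.comp_left (g := fun y => max (-c) (min c y)) hclamp0, ?_⟩
  have hcompl : {x | |h x| ≤ c}ᶜ = {x | c < |h x|} := by ext; simp
  rw [← lintegral_add_compl _ (measurableSet_le hh.abs measurable_const), hcompl]
  calc _ ≤ ENNReal.ofReal (σ * Real.exp (σ * (2 * c))) * ENNReal.ofReal η
          + ENNReal.ofReal (ε / 2) :=
        add_le_add ((setLIntegral_sq_mul_exp_le_of_abs_le hσ hh hφ
            fun x hx => abs_sub_clamp_le hx (φ₀ x)).trans (by gcongr))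
          ((setLIntegral_sq_mul_exp_le_of_lt_abs hσ hc1 hh hφ).trans hc.le)
    _ = ENNReal.ofReal ε := by
        rw [← ENNReal.ofReal_mul (by positivity), mul_div_cancel₀ _ (by positivity),
          ← ENNReal.ofReal_add (by positivity) (by positivity), add_halves]

lemma exists_hasCompactSupport_forall_mem_entS_lintegral_le (hh : Measurable h)
    (hL2 : ∫⁻ x, ENNReal.ofReal (|h x| ^ 2) ∂μ < ∞)
    (hexp : ∀ δ > (0:ℝ), ∀ K : Set X, MeasurableSet K → μ K < ∞ →
      ∫⁻ x in K, ENNReal.ofReal (Real.exp (δ * |h x|)) ∂μ < ∞)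
    (Υ : ℝ) {ε : ℝ} (hε : 0 < ε) :
    ∃ φ : X → ℝ, Continuous φ ∧ HasCompactSupport φ ∧ ∀ g ∈ entS μ Υ,
      ∫⁻ x, ENNReal.ofReal (|h x - φ x| * |g x - 1|) ∂μ ≤ ENNReal.ofReal ε := by
  obtain ⟨σ, hσ, hΥσ⟩ : ∃ σ > 0, Υ / σ ≤ ε / 2 := by
    refine ⟨2 * |Υ| / ε + 1, by positivity, ?_⟩
    have : ε / 2 * (2 * |Υ| / ε + 1) = |Υ| + ε / 2 := by field_simp
    rw [div_le_iff₀ (by positivity), this]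
    linarith [le_abs_self Υ]
  obtain ⟨φ, hφ, hφc, hhφ⟩ :=
    exists_hasCompactSupport_lintegral_sq_mul_exp_sub_le hh hL2 hexp hσ (half_pos hε)
  refine ⟨φ, hφ, hφc, fun g hg => (lintegral_abs_mul_abs_sub_one_le hg hσ _).trans ?_⟩
  calc _ ≤ ENNReal.ofReal (ε / 2) + ENNReal.ofReal (ε / 2) :=
        add_le_add (ENNReal.ofReal_le_ofReal hΥσ) hhφ
    _ = ENNReal.ofReal ε := by
        rw [← ENNReal.ofReal_add (by positivity) (by positivity), add_halves]

end Approximation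

theorem statement8_general {Z : Type*}
    [TopologicalSpace Z] [PolishSpace Z] [LocallyCompactSpace Z]
    [MeasurableSpace Z] [BorelSpace Z]
    (T : ℝ)
    (ν : Measure Z) [IsFiniteMeasureOnCompacts ν]
    (Υ : ℝ)
    (h : ℝ × Z → ℝ) (hmeas : Measurable h)
    -- `∫ |h|² dν_T < ∞`
    (hL2 : ∫⁻ q, ENNReal.ofReal (|h q| ^ 2) ∂(nuT T ν) < ∞)
    -- exponential integrability of `|h|` on sets of finite measure
    (hexp : ∀ δ > (0:ℝ), ∀ K : Set (ℝ × Z), MeasurableSet K → nuT T ν K < ∞ →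
      ∫⁻ q in K, ENNReal.ofReal (Real.exp (δ * |h q|)) ∂(nuT T ν) < ∞)
    (gn : ℕ → ℝ × Z → ℝ) (g : ℝ × Z → ℝ)
    (hgn : ∀ n, gn n ∈ entS (nuT T ν) Υ) (hg : g ∈ entS (nuT T ν) Υ)
    -- `g_n → g` against continuous compactly supported test functions
    (hconv : ∀ φ : ℝ × Z → ℝ, Continuous φ → HasCompactSupport φ →
      Tendsto (fun n => ∫ q, φ q * gn n q ∂(nuT T ν)) atTop
        (𝓝 (∫ q, φ q * g q ∂(nuT T ν)))) :
    Tendsto (fun n => ∫ q, h q * (gn n q - 1) ∂(nuT T ν)) atTop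
      (𝓝 (∫ q, h q * (g q - 1) ∂(nuT T ν))) := by
  have : (nuT T ν).Regular := by unfold nuT; infer_instance
  have : IsFiniteMeasureOnCompacts (nuT T ν) := by unfold nuT; infer_instance
  refine tendsto_of_forall_dist_le fun ε hε => ?_
  obtain ⟨φ, hφ, hφc, hhφ⟩ :=
    exists_hasCompactSupport_forall_mem_entS_lintegral_le hmeas hL2 hexp Υ hε
  have hclose : ∀ G ∈ entS (nuT T ν) Υ, dist (∫ q, h q * (G q - 1) ∂(nuT T ν))
      (∫ q, φ q * G q ∂(nuT T ν) - ∫ q, φ q ∂(nuT T ν)) ≤ ε := fun G hG =>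
    abs_integral_mul_sub_one_sub_le hG hmeas hφ hφc hε.le (hhφ G hG)
  exact ⟨_, _, (hconv φ hφ hφc).sub_const _, fun n => hclose _ (hgn n), hclose g hg⟩

/-- if `g_n, g ∈ S^Υ` and `∫ φ g_n dν_T → ∫ φ g dν_T` for every continuous
compactly supported `φ`, then
`∫ h (g_n − 1) dν_T → ∫ h (g − 1) dν_T`. -/
theorem statement8 {Z : Type*}
    [TopologicalSpace Z] [PolishSpace Z] [LocallyCompactSpace Z]
    [MeasurableSpace Z] [BorelSpace Z]
    (T : ℝ) (hT : 0 < T)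
    (ν : Measure Z) [IsFiniteMeasureOnCompacts ν]
    (Υ : ℝ) (hΥ : 0 < Υ)
    (h : ℝ × Z → ℝ) (hmeas : Measurable h)
    -- `∫ |h|² dν_T < ∞`
    (hL2 : ∫⁻ q, ENNReal.ofReal (|h q| ^ 2) ∂(nuT T ν) < ∞)
    -- exponential integrability of `|h|` on sets of finite measure
    (hexp : ∀ δ > (0:ℝ), ∀ K : Set (ℝ × Z), MeasurableSet K → nuT T ν K < ∞ →
      ∫⁻ q in K, ENNReal.ofReal (Real.exp (δ * |h q|)) ∂(nuT T ν) < ∞)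
    (gn : ℕ → ℝ × Z → ℝ) (g : ℝ × Z → ℝ)
    (hgn : ∀ n, gn n ∈ entS (nuT T ν) Υ) (hg : g ∈ entS (nuT T ν) Υ)
    -- `g_n → g` against continuous compactly supported test functions
    (hconv : ∀ φ : ℝ × Z → ℝ, Continuous φ → HasCompactSupport φ →
      Tendsto (fun n => ∫ q, φ q * gn n q ∂(nuT T ν)) atTop
        (𝓝 (∫ q, φ q * g q ∂(nuT T ν)))) :
    Tendsto (fun n => ∫ q, h q * (gn n q - 1) ∂(nuT T ν)) atTop
      (𝓝 (∫ q, h q * (g q - 1) ∂(nuT T ν))) :=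
  statement8_general T ν Υ h hmeas hL2 hexp gn g hgn hg hconv
end

section
/- Fix Υ > 0. For every ε > 0 there exists a compact set K_ε ⊂ Z such that sup_{g ∈ S^Υ} ∫₀^T ∫_{Z∖K_ε} |h(s,z)| |g(s,z) − 1| ν(dz) ds ≤ ε. -/
open MeasureTheory Filter Topology
open scoped ENNReal

/-!
`ℓ` and `ψ(a) = eᵃ - 1 - a` are convex conjugates, so Young's inequality gives, for every `σ > 0`,
the pointwise bound `|h| |g - 1| ≤ σ ℓ(g) + σ ψ(|h| / σ)`. Integrating, the `ℓ(g)` part contributes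
at most `σ Υ` uniformly over `S^Υ`. The function `ψ(|h| / σ)` is `ν_T`-integrable: it is
`O(|h|²)` where `|h| ≤ σ`, and the set `{|h| > σ}` has finite measure by the `L²` bound, so the
exponential moment controls it there. The finite measure `ψ(|h| / σ) dν_T`, pushed forward to the
Polish space `Z`, is tight, which yields the compact set `K`.
-/

theorem mul_le_mul_log_sub_add_exp (a r : ℝ) (hr : 0 ≤ r) :
    a * r ≤ r * Real.log r - r + Real.exp a := by
  rcases hr.eq_or_lt with rfl | hr
  · simpa using (Real.exp_pos a).le
  · have key := Real.add_one_le_exp (a - Real.log r)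
    rw [Real.exp_sub, Real.exp_log hr, le_div_iff₀ hr] at key
    linarith

theorem mul_abs_sub_one_le (x r : ℝ) (hx : 0 ≤ x) (hr : 0 ≤ r) :
    x * |r - 1| ≤ (r * Real.log r - r + 1) + (Real.exp x - 1 - x) := by
  rcases le_or_gt 1 r with h1 | h1
  · rw [abs_of_nonneg (by linarith)]
    linarith [mul_le_mul_log_sub_add_exp x r hr]
  · rw [abs_of_neg (by linarith)]
    have hsinh : x ≤ Real.sinh x := Real.self_le_sinh_iff.2 hx
    rw [Real.sinh_eq] at hsinh
    linarith [mul_le_mul_log_sub_add_exp (-x) r hr]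

theorem setLIntegral_mul_abs_sub_one_le {X : Type*} [MeasurableSpace X] (μ : Measure X)
    (s : Set X) (u : X → ℝ) {g : X → ℝ} (hg : Measurable g) (hg0 : ∀ x, 0 ≤ g x)
    {σ : ℝ} (hσ : 0 < σ) :
    ∫⁻ x in s, ENNReal.ofReal (|u x| * |g x - 1|) ∂μ ≤
      ENNReal.ofReal σ * (∫⁻ x, ENNReal.ofReal (g x * Real.log (g x) - g x + 1) ∂μ +
        ∫⁻ x in s, ENNReal.ofReal (Real.exp (σ⁻¹ * |u x|) - 1 - σ⁻¹ * |u x|) ∂μ) := by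
  have hℓ : Measurable fun x => ENNReal.ofReal (g x * Real.log (g x) - g x + 1) := by
    fun_prop
  calc ∫⁻ x in s, ENNReal.ofReal (|u x| * |g x - 1|) ∂μ
      ≤ ∫⁻ x in s, ENNReal.ofReal σ * (ENNReal.ofReal (g x * Real.log (g x) - g x + 1) +
          ENNReal.ofReal (Real.exp (σ⁻¹ * |u x|) - 1 - σ⁻¹ * |u x|)) ∂μ := by
        refine lintegral_mono fun x => ?_
        have young := mul_abs_sub_one_le (σ⁻¹ * |u x|) (g x) (by positivity) (hg0 x)
        calc ENNReal.ofReal (|u x| * |g x - 1|)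
            ≤ ENNReal.ofReal (σ * ((g x * Real.log (g x) - g x + 1) +
                (Real.exp (σ⁻¹ * |u x|) - 1 - σ⁻¹ * |u x|))) := by
              refine ENNReal.ofReal_le_ofReal ?_
              calc |u x| * |g x - 1| = σ * (σ⁻¹ * |u x| * |g x - 1|) := by field_simp
                _ ≤ _ := by gcongr
          _ ≤ _ := by
              rw [ENNReal.ofReal_mul hσ.le]
              gcongr
              exact ENNReal.ofReal_add_le
    _ ≤ _ := by
        rw [lintegral_const_mul' _ _ ENNReal.ofReal_ne_top, lintegral_add_left hℓ]
        exact mul_le_mul_right (add_le_add_left (setLIntegral_le_lintegral _ _) _) _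

theorem lintegral_exp_mul_abs_sub_one_sub_lt_top {X : Type*} [MeasurableSpace X]
    {μ : Measure X} {u : X → ℝ} (hu : Measurable u)
    (hL2 : ∫⁻ x, ENNReal.ofReal (|u x| ^ 2) ∂μ < ∞) {δ : ℝ} (hδ : 0 ≤ δ)
    (hexp : ∀ K : Set X, MeasurableSet K → μ K < ∞ →
      ∫⁻ x in K, ENNReal.ofReal (Real.exp (δ * |u x|)) ∂μ < ∞) :
    ∫⁻ x, ENNReal.ofReal (Real.exp (δ * |u x|) - 1 - δ * |u x|) ∂μ < ∞ := by
  set S := {x | 1 < δ * |u x|}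
  have hS : MeasurableSet S := measurableSet_lt measurable_const (by fun_prop)
  have hsq : ∫⁻ x, ENNReal.ofReal ((δ * |u x|) ^ 2) ∂μ < ∞ := by
    simp_rw [mul_pow, ENNReal.ofReal_mul (sq_nonneg δ)]
    rw [lintegral_const_mul' _ _ ENNReal.ofReal_ne_top]
    exact ENNReal.mul_lt_top ENNReal.ofReal_lt_top hL2
  have hSfin : μ S < ∞ := calc
    μ S = ∫⁻ _ in S, 1 ∂μ := (setLIntegral_one S).symm
    _ ≤ ∫⁻ x in S, ENNReal.ofReal ((δ * |u x|) ^ 2) ∂μ := by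
        refine setLIntegral_mono (by fun_prop) fun x hx => ENNReal.one_le_ofReal.2 ?_
        exact one_le_pow₀ (le_of_lt hx)
    _ ≤ _ := setLIntegral_le_lintegral _ _
    _ < ∞ := hsq
  have hpt : ∀ x, ENNReal.ofReal (Real.exp (δ * |u x|) - 1 - δ * |u x|) ≤
      ENNReal.ofReal ((δ * |u x|) ^ 2) +
        S.indicator (fun x => ENNReal.ofReal (Real.exp (δ * |u x|))) x := by
    intro x
    by_cases hx : x ∈ S
    · rw [Set.indicator_of_mem hx]
      refine le_add_left (ENNReal.ofReal_le_ofReal ?_)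
      linarith [mul_nonneg hδ (abs_nonneg (u x))]
    · rw [Set.indicator_of_notMem hx, add_zero]
      refine ENNReal.ofReal_le_ofReal ((le_abs_self _).trans ?_)
      exact Real.abs_exp_sub_one_sub_id_le
        ((abs_of_nonneg (mul_nonneg hδ (abs_nonneg (u x)))).trans_le (not_lt.1 hx))
  calc _ ≤ ∫⁻ x, (ENNReal.ofReal ((δ * |u x|) ^ 2) +
        S.indicator (fun x => ENNReal.ofReal (Real.exp (δ * |u x|))) x) ∂μ := lintegral_mono hpt
    _ = _ := lintegral_add_left (by fun_prop) _
    _ < ∞ := by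
        rw [lintegral_indicator hS]
        exact ENNReal.add_lt_top.2 ⟨hsq, hexp S hS hSfin⟩

theorem exists_isCompact_setLIntegral_snd_notMem_lt {Y Z : Type*} [MeasurableSpace Y]
    [TopologicalSpace Z] [PolishSpace Z] [MeasurableSpace Z] [BorelSpace Z]
    (μ : Measure (Y × Z)) {f : Y × Z → ℝ≥0∞} (hf : ∫⁻ q, f q ∂μ ≠ ∞) {η : ℝ≥0∞} (hη : η ≠ 0) :
    ∃ K : Set Z, IsCompact K ∧ ∫⁻ q in {q : Y × Z | q.2 ∉ K}, f q ∂μ < η := by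
  set ρ := (μ.withDensity f).map Prod.snd
  have hρ : ρ Set.univ ≠ ∞ := by
    rwa [Measure.map_apply measurable_snd MeasurableSet.univ, Set.preimage_univ,
      withDensity_apply _ MeasurableSet.univ, Measure.restrict_univ]
  obtain ⟨K, -, hK, hρK⟩ := MeasurableSet.univ.exists_isCompact_sdiff_lt hρ hη
  refine ⟨K, hK, ?_⟩
  have hKc : MeasurableSet Kᶜ := hK.measurableSet.compl
  rwa [← Set.compl_eq_univ_sdiff, Measure.map_apply measurable_snd hKc,
    withDensity_apply _ (measurable_snd hKc)] at hρK

theorem statement9_general {Z : Type*}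
    [TopologicalSpace Z] [PolishSpace Z]
    [MeasurableSpace Z] [BorelSpace Z]
    (T : ℝ)
    (ν : Measure Z)
    (Υ : ℝ) (hΥ : 0 < Υ)
    (h : ℝ × Z → ℝ) (hmeas : Measurable h)
    (hL2 : ∫⁻ q, ENNReal.ofReal (|h q| ^ 2) ∂(nuT T ν) < ∞)
    (hexp : ∀ δ > (0:ℝ), ∀ K : Set (ℝ × Z), MeasurableSet K → nuT T ν K < ∞ →
      ∫⁻ q in K, ENNReal.ofReal (Real.exp (δ * |h q|)) ∂(nuT T ν) < ∞) :
    ∀ ε > (0:ℝ), ∃ K : Set Z, IsCompact K ∧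
      ∀ g ∈ entS (nuT T ν) Υ,
        (∫⁻ q in {q : ℝ × Z | q.2 ∉ K}, ENNReal.ofReal (|h q| * |g q - 1|) ∂(nuT T ν))
          ≤ ENNReal.ofReal ε := by
  intro ε hε
  obtain ⟨σ, hσ, hσΥ⟩ : ∃ σ > 0, σ * (Υ + Υ) = ε :=
    ⟨ε / (2 * Υ), by positivity, by field_simp; ring⟩
  obtain ⟨K, hK, htail⟩ := exists_isCompact_setLIntegral_snd_notMem_lt (nuT T ν)
    (lintegral_exp_mul_abs_sub_one_sub_lt_top hmeas hL2 (inv_pos.2 hσ).le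
      (hexp σ⁻¹ (inv_pos.2 hσ))).ne (ENNReal.ofReal_pos.2 hΥ).ne'
  refine ⟨K, hK, fun g ⟨hg, hg0, hgℓ⟩ => ?_⟩
  calc _ ≤ _ := setLIntegral_mul_abs_sub_one_le _ _ h hg hg0 hσ
    _ ≤ ENNReal.ofReal σ * (ENNReal.ofReal Υ + ENNReal.ofReal Υ) := by gcongr
    _ = ENNReal.ofReal ε := by
        rw [← ENNReal.ofReal_add hΥ.le hΥ.le, ← ENNReal.ofReal_mul hσ.le, hσΥ]

/-- for every `ε > 0` there is a compact `K_ε ⊂ Z` with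
`sup_{g ∈ S^Υ} ∫₀^T ∫_{Z∖K_ε} |h| |g − 1| dν ds ≤ ε`. -/
theorem statement9 {Z : Type*}
    [TopologicalSpace Z] [PolishSpace Z] [LocallyCompactSpace Z]
    [MeasurableSpace Z] [BorelSpace Z]
    (T : ℝ) (hT : 0 < T)
    (ν : Measure Z) [IsFiniteMeasureOnCompacts ν]
    (Υ : ℝ) (hΥ : 0 < Υ)
    (h : ℝ × Z → ℝ) (hmeas : Measurable h)
    (hL2 : ∫⁻ q, ENNReal.ofReal (|h q| ^ 2) ∂(nuT T ν) < ∞)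
    (hexp : ∀ δ > (0:ℝ), ∀ K : Set (ℝ × Z), MeasurableSet K → nuT T ν K < ∞ →
      ∫⁻ q in K, ENNReal.ofReal (Real.exp (δ * |h q|)) ∂(nuT T ν) < ∞) :
    ∀ ε > (0:ℝ), ∃ K : Set Z, IsCompact K ∧
      ∀ g ∈ entS (nuT T ν) Υ,
        (∫⁻ q in {q : ℝ × Z | q.2 ∉ K}, ENNReal.ofReal (|h q| * |g q - 1|) ∂(nuT T ν))
          ≤ ENNReal.ofReal ε :=
  statement9_general T ν Υ hΥ h hmeas hL2 hexp
end

section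
/- Fix Υ > 0. For every ε > 0 there exists δ > 0 such that for every measurable set K ⊆ [0,T] with λ_T(K) < δ, sup_{g ∈ S^Υ} ∫_K ∫_Z |h(s,z)| |g(s,z) − 1| ν(dz) ds ≤ ε. -/
open MeasureTheory Filter Topology
open scoped ENNReal

/-!
Young's inequality for `ℓ` and its convex conjugate `y ↦ eʸ - 1` gives, pointwise,
`σ |h| |g - 1| ≤ ℓ(g) + (e^{σ|h|} + e^{-σ|h|} - 2)`. Integrated over `K × Z`, the first term
contributes at most `Υ`. The second is a fixed `ν_T`-integrable function: it is `O(|h|²)` where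
`σ|h| ≤ 1`, and the complement of that set has finite measure by Chebyshev, so the exponential
moment hypothesis applies there. By Fubini its integral over `K × Z` is small once `λ(K)` is, and
`σ = 2Υ / ε` gives the bound `ε`.
-/

namespace Real

lemma mul_le_mul_log_sub_add_exp {b : ℝ} (hb : 0 ≤ b) (y : ℝ) :
    b * y ≤ b * log b - b + exp y := by
  rcases hb.eq_or_lt with rfl | hb
  · simpa using (exp_pos y).le
  · have h := add_one_le_exp (y - log b)
    rw [exp_sub, exp_log hb, le_div_iff₀ hb] at h
    linarith

lemma mul_abs_sub_one_le {b : ℝ} (hb : 0 ≤ b) (x : ℝ) :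
    x * |b - 1| ≤ (b * log b - b + 1) + (exp x + exp (-x) - 2) := by
  have hpos := mul_le_mul_log_sub_add_exp hb x
  have hneg := mul_le_mul_log_sub_add_exp hb (-x)
  have epos := add_one_le_exp x
  have eneg := add_one_le_exp (-x)
  rcases le_total 1 b with h | h
  · rw [abs_of_nonneg (sub_nonneg.2 h)]; linarith
  · rw [abs_of_nonpos (sub_nonpos.2 h)]; linarith

lemma exp_add_exp_neg_sub_two_le {x : ℝ} (hx : |x| ≤ 1) :
    exp x + exp (-x) - 2 ≤ 2 * x ^ 2 := by
  have epos := abs_le.1 (abs_exp_sub_one_sub_id_le hx)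
  have eneg := abs_le.1 (abs_exp_sub_one_sub_id_le ((abs_neg x).trans_le hx))
  rw [neg_sq] at eneg
  linarith [epos.2, eneg.2]

end Real

section

variable {X : Type*} [MeasurableSpace X] {μ : Measure X}

lemma measure_one_lt_mul_lt_top {f : X → ℝ} (hf : Measurable f)
    (hL2 : ∫⁻ x, ENNReal.ofReal (f x ^ 2) ∂μ < ∞) (c : ℝ) :
    μ {x | 1 < c * f x} < ∞ := by
  have hmeas : Measurable fun x => ENNReal.ofReal (c ^ 2) * ENNReal.ofReal (f x ^ 2) :=
    measurable_const.mul (hf.pow_const 2).ennreal_ofReal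
  refine (meas_le_lintegral₀ hmeas.aemeasurable fun x (hx : 1 < c * f x) => ?_).trans_lt ?_
  · rw [← ENNReal.ofReal_mul (sq_nonneg c), ← ENNReal.ofReal_one, ← mul_pow]
    exact ENNReal.ofReal_le_ofReal (one_le_pow₀ hx.le)
  · rw [lintegral_const_mul _ (hf.pow_const 2).ennreal_ofReal]
    exact ENNReal.mul_lt_top ENNReal.ofReal_lt_top hL2

lemma lintegral_exp_add_exp_neg_sub_two_lt_top {f : X → ℝ} (hf : Measurable f)
    (hf₀ : ∀ x, 0 ≤ f x) {c : ℝ} (hc : 0 ≤ c)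
    (hL2 : ∫⁻ x, ENNReal.ofReal (f x ^ 2) ∂μ < ∞)
    (hexp : ∫⁻ x in {x | 1 < c * f x}, ENNReal.ofReal (Real.exp (c * f x)) ∂μ < ∞) :
    ∫⁻ x, ENNReal.ofReal (Real.exp (c * f x) + Real.exp (-(c * f x)) - 2) ∂μ < ∞ := by
  set B := {x | 1 < c * f x}
  have hB : MeasurableSet B := measurableSet_lt measurable_const (hf.const_mul c)
  have hf2 : Measurable fun x => ENNReal.ofReal (f x ^ 2) := (hf.pow_const 2).ennreal_ofReal
  have hpt : ∀ x, ENNReal.ofReal (Real.exp (c * f x) + Real.exp (-(c * f x)) - 2) ≤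
      ENNReal.ofReal (2 * c ^ 2) * ENNReal.ofReal (f x ^ 2) +
        B.indicator (fun x => ENNReal.ofReal (Real.exp (c * f x))) x := by
    intro x
    have hcf : 0 ≤ c * f x := mul_nonneg hc (hf₀ x)
    by_cases hx : x ∈ B
    · rw [Set.indicator_of_mem hx]
      refine (ENNReal.ofReal_le_ofReal ?_).trans le_add_self
      linarith [Real.exp_le_one_iff.2 (neg_nonpos.2 hcf)]
    · rw [Set.indicator_of_notMem hx, add_zero, ← ENNReal.ofReal_mul (by positivity)]
      refine ENNReal.ofReal_le_ofReal ((Real.exp_add_exp_neg_sub_two_le ?_).trans_eq (by ring))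
      rw [abs_of_nonneg hcf]
      exact not_lt.1 hx
  calc _ ≤ ∫⁻ x, (ENNReal.ofReal (2 * c ^ 2) * ENNReal.ofReal (f x ^ 2) +
            B.indicator (fun x => ENNReal.ofReal (Real.exp (c * f x))) x) ∂μ :=
        lintegral_mono hpt
    _ = ENNReal.ofReal (2 * c ^ 2) * ∫⁻ x, ENNReal.ofReal (f x ^ 2) ∂μ +
          ∫⁻ x in B, ENNReal.ofReal (Real.exp (c * f x)) ∂μ := by
        rw [lintegral_add_left (hf2.const_mul _), lintegral_const_mul _ hf2,
          lintegral_indicator hB]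
    _ < ∞ := ENNReal.add_lt_top.2 ⟨ENNReal.mul_lt_top ENNReal.ofReal_lt_top hL2, hexp⟩

lemma lintegral_mul_abs_sub_one_le {c : ℝ} (hc : 0 ≤ c) (f : X → ℝ) {g : X → ℝ}
    (hg : Measurable g) (hg₀ : ∀ x, 0 ≤ g x) :
    ENNReal.ofReal c * ∫⁻ x, ENNReal.ofReal (|f x| * |g x - 1|) ∂μ ≤
      ∫⁻ x, ENNReal.ofReal (g x * Real.log (g x) - g x + 1) ∂μ +
        ∫⁻ x, ENNReal.ofReal (Real.exp (c * |f x|) + Real.exp (-(c * |f x|)) - 2) ∂μ := by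
  have hℓ : Measurable fun x => ENNReal.ofReal (g x * Real.log (g x) - g x + 1) := by
    fun_prop
  rw [← lintegral_add_left hℓ]
  refine (lintegral_const_mul_le _ _).trans (lintegral_mono fun x => ?_)
  rw [← ENNReal.ofReal_mul hc, ← mul_assoc]
  exact (ENNReal.ofReal_le_ofReal (Real.mul_abs_sub_one_le (hg₀ x) _)).trans
    ENNReal.ofReal_add_le

end

lemma exists_pos_setLIntegral_prod_univ_lt {α β : Type*} [MeasurableSpace α]
    [MeasurableSpace β] {μ : Measure α} {ν : Measure β} [SFinite μ] [SFinite ν]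
    {F : α × β → ℝ≥0∞} (hF : Measurable F) (hFfin : ∫⁻ q, F q ∂μ.prod ν ≠ ∞) {ε : ℝ≥0∞}
    (hε : ε ≠ 0) :
    ∃ δ > (0 : ℝ), ∀ K, μ K < ENNReal.ofReal δ →
      ∫⁻ q in K ×ˢ Set.univ, F q ∂μ.prod ν < ε := by
  rw [lintegral_prod _ hF.aemeasurable] at hFfin
  obtain ⟨δ', hδ', hsmall⟩ := exists_pos_setLIntegral_lt_of_measure_lt hFfin hε
  obtain ⟨δ, -, hδ, hδδ'⟩ := ENNReal.lt_iff_exists_real_btwn.1 hδ'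
  refine ⟨δ, ENNReal.ofReal_pos.1 hδ, fun K hK => ?_⟩
  rw [setLIntegral_prod _ hF.aemeasurable, Measure.restrict_univ]
  exact hsmall K (hK.trans hδδ')

theorem statement10_general {Z : Type*}
    [TopologicalSpace Z] [PolishSpace Z] [LocallyCompactSpace Z]
    [MeasurableSpace Z]
    (T : ℝ)
    (ν : Measure Z) [IsFiniteMeasureOnCompacts ν]
    (Υ : ℝ) (hΥ : 0 < Υ)
    (h : ℝ × Z → ℝ) (hmeas : Measurable h)
    (hL2 : ∫⁻ q, ENNReal.ofReal (|h q| ^ 2) ∂(nuT T ν) < ∞)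
    (hexp : ∀ δ > (0:ℝ), ∀ K : Set (ℝ × Z), MeasurableSet K → nuT T ν K < ∞ →
      ∫⁻ q in K, ENNReal.ofReal (Real.exp (δ * |h q|)) ∂(nuT T ν) < ∞) :
    ∀ ε > (0:ℝ), ∃ δ > (0:ℝ), ∀ K : Set ℝ,
      MeasurableSet K → K ⊆ Set.Icc 0 T → volume K < ENNReal.ofReal δ →
      ∀ g ∈ entS (nuT T ν) Υ,
        (∫⁻ q in K ×ˢ (Set.univ : Set Z), ENNReal.ofReal (|h q| * |g q - 1|) ∂(nuT T ν))
          ≤ ENNReal.ofReal ε := by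
  intro ε hε
  set σ := 2 * Υ / ε with hσ_def
  have hσ : 0 < σ := by positivity
  have hB := measure_one_lt_mul_lt_top hmeas.abs hL2 σ
  have hW := lintegral_exp_add_exp_neg_sub_two_lt_top hmeas.abs (fun q => abs_nonneg (h q)) hσ.le
    hL2 (hexp σ hσ _ (measurableSet_lt measurable_const (hmeas.abs.const_mul σ)) hB)
  obtain ⟨δ, hδ, hsmall⟩ := exists_pos_setLIntegral_prod_univ_lt (by fun_prop) hW.ne
    (ENNReal.ofReal_pos.2 hΥ).ne'
  refine ⟨δ, hδ, fun K _ _ hK g ⟨hg, hg₀, hgℓ⟩ => ?_⟩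
  refine (ENNReal.mul_le_mul_iff_right (ENNReal.ofReal_pos.2 hσ).ne' ENNReal.ofReal_ne_top).1 ?_
  calc _ ≤ _ := lintegral_mul_abs_sub_one_le hσ.le h hg hg₀
    _ ≤ ENNReal.ofReal Υ + ENNReal.ofReal Υ :=
        add_le_add ((setLIntegral_le_lintegral _ _).trans hgℓ)
          (hsmall K ((Measure.restrict_le_self _).trans_lt hK)).le
    _ = ENNReal.ofReal σ * ENNReal.ofReal ε := by
        rw [← ENNReal.ofReal_add hΥ.le hΥ.le, ← ENNReal.ofReal_mul hσ.le, hσ_def,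
          div_mul_cancel₀ _ hε.ne', two_mul]

/-- for every `ε > 0` there is `δ > 0` such that for every measurable
`K ⊆ [0,T]` with `λ_T(K) < δ`,
`sup_{g ∈ S^Υ} ∫_K ∫_Z |h(s,z)| |g(s,z) − 1| ν(dz) ds ≤ ε`. -/
theorem statement10 {Z : Type*}
    [TopologicalSpace Z] [PolishSpace Z] [LocallyCompactSpace Z]
    [MeasurableSpace Z] [BorelSpace Z]
    (T : ℝ) (hT : 0 < T)
    (ν : Measure Z) [IsFiniteMeasureOnCompacts ν]
    (Υ : ℝ) (hΥ : 0 < Υ)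
    (h : ℝ × Z → ℝ) (hmeas : Measurable h)
    (hL2 : ∫⁻ q, ENNReal.ofReal (|h q| ^ 2) ∂(nuT T ν) < ∞)
    (hexp : ∀ δ > (0:ℝ), ∀ K : Set (ℝ × Z), MeasurableSet K → nuT T ν K < ∞ →
      ∫⁻ q in K, ENNReal.ofReal (Real.exp (δ * |h q|)) ∂(nuT T ν) < ∞) :
    ∀ ε > (0:ℝ), ∃ δ > (0:ℝ), ∀ K : Set ℝ,
      MeasurableSet K → K ⊆ Set.Icc 0 T → volume K < ENNReal.ofReal δ →
      ∀ g ∈ entS (nuT T ν) Υ,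
        (∫⁻ q in K ×ˢ (Set.univ : Set Z), ENNReal.ofReal (|h q| * |g q - 1|) ∂(nuT T ν))
          ≤ ENNReal.ofReal ε :=
  statement10_general T ν Υ hΥ h hmeas hL2 hexp
end

section
/- Fix N > 0 and Υ > 0. The family R₂ = { h : [0,T] → H : h(t) = ∫₀^t ∫_Z γ(τ, r(τ), z)(φ(τ,z) − 1) ν(dz) dτ, where r : [0,T] → V is measurable with sup_{t∈[0,T]} ‖r(t)‖_H ≤ N and φ ∈ S^Υ }, regarded as a subset of C([0,T];V*) with the supremum norm, is relatively compact in C([0,T];V*). -/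
/-!
Write `F t = J (w t)` with `J w = ⟪w, i ·⟫ : H → V*` and `w t = ∫₀ᵗ ∫_Z (φ - 1) γ(τ, r τ, z) dν dτ`.
Since `i` is compact, `J` maps bounded sets of `H` to relatively compact subsets of `V*`, so by
Arzelà–Ascoli it suffices to bound `‖w t‖` and to make `‖w b - w a‖` small for `b - a` small,
uniformly over the family. By (H.8) both are controlled by `(1 + N) ∫ L |φ - 1|` over
`[0,t] × Z`, resp. `(a,b] × Z`. For `φ ∈ S^Υ` the Fenchel–Young inequality for
`ℓ(b) = b log b - b + 1` (whose conjugate is `x ↦ eˣ - 1`) gives pointwise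
`L |φ - 1| ≤ (3 + e^{σK}) L √ℓ(φ) + ℓ(φ)/σ + c(σ,K,δ) e^{δL²} 1_{L > 1}`; integrating with
Cauchy–Schwarz, and using `L ∈ L²` and the exponential integrability `L ∈ 𝓗₂`, shows that
`∫_E L |φ - 1|` is bounded, and small when `∫_E L²` is small, uniformly in `φ ∈ S^Υ`.
-/

open MeasureTheory Filter Topology
open scoped ENNReal

/-- The class `𝓗_p` on `(Z_T, ν_T)`. -/
def memHp {X : Type*} [MeasurableSpace X] (μ : Measure X) (p : ℝ) (h : X → ℝ) : Prop :=
  Measurable h ∧ (∀ x, 0 ≤ h x) ∧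
    ∃ δ > (0:ℝ), ∀ E : Set X, MeasurableSet E → μ E < ∞ →
      ∫⁻ x in E, ENNReal.ofReal (Real.exp (δ * h x ^ p)) ∂μ < ∞

open InformationTheory
open scoped BoundedContinuousFunction

namespace Real

lemma exp_sub_one_le_mul_exp (y : ℝ) : exp y - 1 ≤ y * exp y := by
  have h := add_one_le_exp (-y)
  rw [exp_neg] at h
  have := exp_pos y
  nlinarith [mul_inv_cancel₀ this.ne']

lemma sq_mul_exp_le (σ : ℝ) {δ x : ℝ} (hδ : 0 < δ) (hx : 0 ≤ x) :
    x ^ 2 * exp (σ * x) ≤ exp ((σ + 2) ^ 2 / (4 * δ)) * exp (δ * x ^ 2) := by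
  have hx2 : x ^ 2 ≤ exp (2 * x) := by
    rw [show 2 * x = x + x by ring, exp_add, sq]
    have := add_one_le_exp x
    exact mul_le_mul (by linarith) (by linarith) hx (exp_pos x).le
  have hamgm : (σ + 2) * x ≤ (σ + 2) ^ 2 / (4 * δ) + δ * x ^ 2 := by
    rw [div_add' _ _ _ (by positivity), le_div_iff₀ (by positivity)]
    nlinarith [sq_nonneg (σ + 2 - 2 * δ * x)]
  calc x ^ 2 * exp (σ * x) ≤ exp (2 * x) * exp (σ * x) := by gcongr
    _ = exp ((σ + 2) * x) := by rw [← exp_add]; ring_nf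
    _ ≤ _ := by rw [← exp_add]; exact exp_le_exp.2 hamgm

lemma exp_mul_sub_one_le {a σ δ K : ℝ} (ha : 0 ≤ a) (hσ : 0 ≤ σ) (hδ : 0 < δ) (hK : 1 ≤ K) :
    exp (σ * a) - 1 ≤ σ * exp (σ * K) * a +
      if 1 < a then exp ((σ + 2) ^ 2 / (4 * δ)) / K ^ 2 * exp (δ * a ^ 2) else 0 := by
  by_cases haK : a ≤ K
  · have hexp : exp (σ * a) ≤ exp (σ * K) := exp_le_exp.2 (by gcongr)
    have hite : 0 ≤ if 1 < a then exp ((σ + 2) ^ 2 / (4 * δ)) / K ^ 2 * exp (δ * a ^ 2) else 0 := by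
      split_ifs <;> positivity
    nlinarith [exp_sub_one_le_mul_exp (σ * a), mul_nonneg hσ ha]
  · push Not at haK
    rw [if_pos (hK.trans_lt haK)]
    have hK2 : K ^ 2 ≤ a ^ 2 := by gcongr
    have hbig : exp (σ * a) ≤ exp ((σ + 2) ^ 2 / (4 * δ)) / K ^ 2 * exp (δ * a ^ 2) := by
      rw [div_mul_eq_mul_div, le_div_iff₀ (by positivity)]
      nlinarith [sq_mul_exp_le σ hδ ha, exp_pos (σ * a)]
    nlinarith [mul_nonneg (mul_nonneg hσ (exp_pos (σ * K)).le) ha]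

end Real

namespace InformationTheory

lemma sq_sqrt_sub_one_le_klFun {b : ℝ} (hb : 0 ≤ b) : (√b - 1) ^ 2 ≤ klFun b := by
  obtain rfl | hb := hb.eq_or_lt
  · simp [klFun_zero]
  set u := √b
  have hu : 0 < u := Real.sqrt_pos.2 hb
  have hub : u ^ 2 = b := Real.sq_sqrt hb.le
  have hlog : Real.log b = 2 * Real.log u := by rw [← hub, Real.log_pow]; push_cast; ring
  have hlog_u : u - 1 ≤ u * Real.log u := by
    have := Real.log_le_sub_one_of_pos (inv_pos.2 hu)
    rw [Real.log_inv] at this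
    nlinarith [mul_inv_cancel₀ hu.ne']
  rw [klFun, hlog, ← hub]
  nlinarith

lemma one_le_klFun {b : ℝ} (hb : 4 ≤ b) : 1 ≤ klFun b := by
  have h2 : 2 ≤ √b := Real.le_sqrt_of_sq_le (by linarith)
  nlinarith [sq_sqrt_sub_one_le_klFun (by linarith : (0:ℝ) ≤ b)]

lemma abs_sub_one_le_three_mul_sqrt_klFun {b : ℝ} (hb : 0 ≤ b) (hb4 : b ≤ 4) :
    |b - 1| ≤ 3 * √(klFun b) := by
  have h1 : |√b - 1| ≤ √(klFun b) := by
    rw [← Real.sqrt_sq_eq_abs]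
    exact Real.sqrt_le_sqrt (sq_sqrt_sub_one_le_klFun hb)
  have h2 : √b ≤ 2 := Real.sqrt_le_iff.2 ⟨by norm_num, by linarith⟩
  have hfac : |b - 1| = |√b - 1| * (√b + 1) := by
    rw [← abs_of_nonneg (by positivity : 0 ≤ √b + 1), ← abs_mul]
    congr 1
    nlinarith [Real.sq_sqrt hb]
  rw [hfac]
  nlinarith [abs_nonneg (√b - 1), Real.sqrt_nonneg b]

/-- The Fenchel–Young inequality for `klFun`, whose convex conjugate is `x ↦ exp x - 1`. -/
lemma mul_le_klFun_add_exp_sub_one (x : ℝ) {b : ℝ} (hb : 0 ≤ b) :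
    x * b ≤ klFun b + (Real.exp x - 1) := by
  obtain rfl | hb := hb.eq_or_lt
  · simpa [klFun_zero] using (Real.exp_pos x).le
  have h := Real.add_one_le_exp (x - Real.log b)
  rw [Real.exp_sub, Real.exp_log hb, le_div_iff₀ hb] at h
  rw [klFun]
  nlinarith

lemma mul_abs_sub_one_le {a b σ δ K : ℝ} (ha : 0 ≤ a) (hb : 0 ≤ b) (hσ : 0 < σ) (hδ : 0 < δ)
    (hK : 1 ≤ K) :
    a * |b - 1| ≤ (3 + Real.exp (σ * K)) * (a * √(klFun b)) + klFun b / σ +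
      if 1 < a then Real.exp ((σ + 2) ^ 2 / (4 * δ)) / (σ * K ^ 2) * Real.exp (δ * a ^ 2)
      else 0 := by
  set c := Real.exp ((σ + 2) ^ 2 / (4 * δ))
  have hℓ := klFun_nonneg hb
  have hite : 0 ≤ if 1 < a then c / (σ * K ^ 2) * Real.exp (δ * a ^ 2) else 0 := by
    split_ifs <;> positivity
  by_cases hb4 : b ≤ 4
  · have := mul_le_mul_of_nonneg_left (abs_sub_one_le_three_mul_sqrt_klFun hb hb4) ha
    have : 0 ≤ Real.exp (σ * K) * (a * √(klFun b)) := by positivity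
    have : 0 ≤ klFun b / σ := by positivity
    nlinarith
  push Not at hb4
  have hsqrt : 1 ≤ √(klFun b) := Real.one_le_sqrt.2 (one_le_klFun hb4.le)
  have hyoung := mul_le_klFun_add_exp_sub_one (σ * a) hb
  have hexp := Real.exp_mul_sub_one_le ha hσ.le hδ hK
  have hite' : (if 1 < a then c / K ^ 2 * Real.exp (δ * a ^ 2) else 0) =
      σ * if 1 < a then c / (σ * K ^ 2) * Real.exp (δ * a ^ 2) else 0 := by
    split_ifs
    · field_simp
    · simp
  rw [hite'] at hexp
  generalize (if 1 < a then c / (σ * K ^ 2) * Real.exp (δ * a ^ 2) else 0) = t at hexp ⊢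
  have hab : a * |b - 1| ≤ a * b := by
    gcongr; rw [abs_le]; constructor <;> linarith
  have hσab : σ * (a * b) ≤ σ * (klFun b / σ + Real.exp (σ * K) * (a * √(klFun b)) + t) := by
    rw [mul_add, mul_add, mul_div_cancel₀ _ hσ.ne']
    nlinarith [mul_nonneg hσ.le (mul_nonneg (Real.exp_pos (σ * K)).le ha)]
  nlinarith [le_of_mul_le_mul_left hσab hσ, mul_nonneg ha (Real.sqrt_nonneg (klFun b))]

end InformationTheory

section EntropyEstimates

variable {X : Type*} {g h : X → ℝ}

lemma ofReal_mul_abs_sub_one_le {σ δ K : ℝ} (hh0 : ∀ x, 0 ≤ h x) (hg0 : ∀ x, 0 ≤ g x)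
    (hσ : 0 < σ) (hδ : 0 < δ) (hK : 1 ≤ K) (x : X) :
    ENNReal.ofReal (h x * |g x - 1|) ≤
      ENNReal.ofReal (3 + Real.exp (σ * K)) * ENNReal.ofReal (h x * √(klFun (g x))) +
        ENNReal.ofReal σ⁻¹ * ENNReal.ofReal (klFun (g x)) +
        ENNReal.ofReal (Real.exp ((σ + 2) ^ 2 / (4 * δ)) / (σ * K ^ 2)) *
          {x | 1 < h x}.indicator (fun x ↦ ENNReal.ofReal (Real.exp (δ * h x ^ 2))) x := by
  refine (ENNReal.ofReal_le_ofReal (mul_abs_sub_one_le (hh0 x) (hg0 x) hσ hδ hK)).trans_eq ?_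
  have hℓ := klFun_nonneg (hg0 x)
  have hh := hh0 x
  rw [ENNReal.ofReal_add (by positivity) (by split_ifs <;> positivity),
    ENNReal.ofReal_add (by positivity) (by positivity)]
  congr 1
  · rw [div_eq_inv_mul, ENNReal.ofReal_mul (inv_nonneg.2 hσ.le),
      ENNReal.ofReal_mul (by positivity : 0 ≤ 3 + Real.exp (σ * K))]
  · by_cases h1 : x ∈ {x | 1 < h x}
    · rw [if_pos (show 1 < h x from h1), Set.indicator_of_mem h1,
        ENNReal.ofReal_mul (by positivity)]
    · rw [if_neg (show ¬1 < h x from h1), Set.indicator_of_notMem h1, ENNReal.ofReal_zero,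
        mul_zero]

variable [MeasurableSpace X] {μ : Measure X} {Υ : ℝ}

lemma lintegral_klFun_le_of_mem_entS (hg : g ∈ entS μ Υ) :
    ∫⁻ x, ENNReal.ofReal (klFun (g x)) ∂μ ≤ ENNReal.ofReal Υ := by
  simpa only [klFun_apply, add_sub_right_comm] using hg.2.2

lemma entS_anti {μ' : Measure X} (hμ : μ' ≤ μ) : entS μ Υ ⊆ entS μ' Υ :=
  fun _ ⟨hm, h0, hint⟩ ↦ ⟨hm, h0, (lintegral_mono' hμ le_rfl).trans hint⟩

lemma lintegral_ofReal_mul_le_sqrt_mul_sqrt {f : X → ℝ} (hf : Measurable f) (hg : Measurable g)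
    (hf0 : ∀ x, 0 ≤ f x) (hg0 : ∀ x, 0 ≤ g x) :
    ∫⁻ x, ENNReal.ofReal (f x * g x) ∂μ ≤
      (∫⁻ x, ENNReal.ofReal (f x ^ 2) ∂μ) ^ (1 / 2 : ℝ) *
        (∫⁻ x, ENNReal.ofReal (g x ^ 2) ∂μ) ^ (1 / 2 : ℝ) := by
  have hsq : ∀ {u : X → ℝ}, (∀ x, 0 ≤ u x) →
      ∀ x, ENNReal.ofReal (u x ^ 2) = ENNReal.ofReal (u x) ^ (2 : ℝ) := fun hu x ↦ by
    rw [ENNReal.ofReal_pow (hu x), ENNReal.rpow_two]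
  simp_rw [ENNReal.ofReal_mul (hf0 _), hsq hf0, hsq hg0]
  simpa using ENNReal.lintegral_mul_le_Lp_mul_Lq μ Real.HolderConjugate.two_two
    hf.ennreal_ofReal.aemeasurable hg.ennreal_ofReal.aemeasurable

theorem lintegral_mul_abs_sub_one_le_s18 (hh : Measurable h) (hh0 : ∀ x, 0 ≤ h x)
    (hg : g ∈ entS μ Υ) {σ δ K : ℝ} (hσ : 0 < σ) (hδ : 0 < δ) (hK : 1 ≤ K) :
    ∫⁻ x, ENNReal.ofReal (h x * |g x - 1|) ∂μ ≤
      ENNReal.ofReal (3 + Real.exp (σ * K)) * (∫⁻ x, ENNReal.ofReal (h x ^ 2) ∂μ) ^ (1 / 2 : ℝ) *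
          ENNReal.ofReal Υ ^ (1 / 2 : ℝ) +
        ENNReal.ofReal (Υ / σ) +
        ENNReal.ofReal (Real.exp ((σ + 2) ^ 2 / (4 * δ)) / (σ * K ^ 2)) *
          ∫⁻ x in {x | 1 < h x}, ENNReal.ofReal (Real.exp (δ * h x ^ 2)) ∂μ := by
  have hent := lintegral_klFun_le_of_mem_entS hg
  obtain ⟨hgm, hg0, -⟩ := hg
  have hℓm : Measurable fun x ↦ klFun (g x) := measurable_klFun.comp hgm
  have hsqrtm : Measurable fun x ↦ √(klFun (g x)) := hℓm.sqrt
  have hcs : ∫⁻ x, ENNReal.ofReal (h x * √(klFun (g x))) ∂μ ≤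
      (∫⁻ x, ENNReal.ofReal (h x ^ 2) ∂μ) ^ (1 / 2 : ℝ) * ENNReal.ofReal Υ ^ (1 / 2 : ℝ) := by
    refine (lintegral_ofReal_mul_le_sqrt_mul_sqrt hh hsqrtm hh0 fun _ ↦ Real.sqrt_nonneg _).trans ?_
    simp_rw [Real.sq_sqrt (klFun_nonneg (hg0 _))]
    gcongr
  calc ∫⁻ x, ENNReal.ofReal (h x * |g x - 1|) ∂μ
      ≤ ∫⁻ x, (ENNReal.ofReal (3 + Real.exp (σ * K)) * ENNReal.ofReal (h x * √(klFun (g x))) +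
          ENNReal.ofReal σ⁻¹ * ENNReal.ofReal (klFun (g x)) +
          ENNReal.ofReal (Real.exp ((σ + 2) ^ 2 / (4 * δ)) / (σ * K ^ 2)) *
            {x | 1 < h x}.indicator (fun x ↦ ENNReal.ofReal (Real.exp (δ * h x ^ 2))) x) ∂μ :=
        lintegral_mono (ofReal_mul_abs_sub_one_le hh0 hg0 hσ hδ hK)
    _ = ENNReal.ofReal (3 + Real.exp (σ * K)) * ∫⁻ x, ENNReal.ofReal (h x * √(klFun (g x))) ∂μ +
          ENNReal.ofReal σ⁻¹ * ∫⁻ x, ENNReal.ofReal (klFun (g x)) ∂μ +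
          ENNReal.ofReal (Real.exp ((σ + 2) ^ 2 / (4 * δ)) / (σ * K ^ 2)) *
            ∫⁻ x in {x | 1 < h x}, ENNReal.ofReal (Real.exp (δ * h x ^ 2)) ∂μ := by
      have hS : MeasurableSet {x | 1 < h x} := measurableSet_lt measurable_const hh
      rw [lintegral_add_left (by fun_prop), lintegral_add_left (by fun_prop),
        lintegral_const_mul _ (by fun_prop), lintegral_const_mul _ (by fun_prop),
        lintegral_const_mul _ ((by fun_prop : Measurable _).indicator hS), lintegral_indicator hS]
    _ ≤ _ := by
      rw [div_eq_inv_mul Υ σ, ENNReal.ofReal_mul (inv_nonneg.2 hσ.le), mul_assoc _ (_ ^ _)]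
      gcongr

theorem memHp.exists_setLIntegral_exp_sq_ne_top (hh : memHp μ 2 h)
    (hh2 : ∫⁻ x, ENNReal.ofReal (h x ^ 2) ∂μ ≠ ∞) :
    ∃ δ > 0, ∫⁻ x in {x | 1 < h x}, ENNReal.ofReal (Real.exp (δ * h x ^ 2)) ∂μ ≠ ∞ := by
  obtain ⟨hm, -, δ, hδ, hexp⟩ := hh
  have hfin : μ {x | 1 < h x} < ∞ := by
    refine lt_of_le_of_lt ?_ hh2.lt_top
    calc μ {x | 1 < h x} ≤ μ {x | 1 ≤ ENNReal.ofReal (h x ^ 2)} := by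
          refine measure_mono fun x (hx : 1 < h x) ↦ ?_
          rw [Set.mem_ofPred_eq, ← ENNReal.ofReal_one]
          exact ENNReal.ofReal_le_ofReal (by nlinarith)
      _ ≤ ∫⁻ x, ENNReal.ofReal (h x ^ 2) ∂μ := by
          simpa only [one_mul] using
            mul_meas_ge_le_lintegral (μ := μ) (hm.pow_const 2).ennreal_ofReal 1
  exact ⟨δ, hδ, by simpa using (hexp _ (measurableSet_lt measurable_const hm) hfin).ne⟩

theorem memHp.exists_lintegral_mul_abs_sub_one_le (hh : memHp μ 2 h)
    (hh2 : ∫⁻ x, ENNReal.ofReal (h x ^ 2) ∂μ ≠ ∞) (Υ : ℝ) :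
    ∃ C ≠ ∞, ∀ g ∈ entS μ Υ, ∫⁻ x, ENNReal.ofReal (h x * |g x - 1|) ∂μ ≤ C := by
  obtain ⟨δ, hδ, hD⟩ := hh.exists_setLIntegral_exp_sq_ne_top hh2
  refine ⟨_, ?_, fun g hg ↦ lintegral_mul_abs_sub_one_le_s18 hh.1 hh.2.1 hg one_pos hδ le_rfl⟩
  finiteness

theorem memHp.exists_pos_setLIntegral_mul_abs_sub_one_le (hh : memHp μ 2 h)
    (hh2 : ∫⁻ x, ENNReal.ofReal (h x ^ 2) ∂μ ≠ ∞) (hΥ : 0 ≤ Υ) {ε : ℝ} (hε : 0 < ε) :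
    ∃ θ > 0, ∀ g ∈ entS μ Υ, ∀ E, ∫⁻ x in E, ENNReal.ofReal (h x ^ 2) ∂μ ≤ ENNReal.ofReal θ →
      ∫⁻ x in E, ENNReal.ofReal (h x * |g x - 1|) ∂μ ≤ ENNReal.ofReal ε := by
  obtain ⟨δ, hδ, hD⟩ := hh.exists_setLIntegral_exp_sq_ne_top hh2
  set D := ∫⁻ x in {x | 1 < h x}, ENNReal.ofReal (Real.exp (δ * h x ^ 2)) ∂μ
  -- `σ`, then `K`, then `θ` make the three terms of `lintegral_mul_abs_sub_one_le` `< ε / 3`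
  obtain ⟨σ, hσΥ, hσ⟩ : ∃ σ, Υ / σ < ε / 3 ∧ 0 < σ :=
    (((tendsto_const_nhds (x := Υ)).div_atTop tendsto_id).eventually
      (gt_mem_nhds (by positivity))).and (eventually_gt_atTop 0) |>.exists
  set c := Real.exp ((σ + 2) ^ 2 / (4 * δ))
  obtain ⟨K, hKD, hK⟩ : ∃ K, c / (σ * K ^ 2) * D.toReal < ε / 3 ∧ 1 ≤ K := by
    have : Tendsto (fun K : ℝ ↦ c / (σ * K ^ 2) * D.toReal) atTop (𝓝 0) := by
      simpa using ((tendsto_const_nhds (x := c)).div_atTop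
        ((tendsto_pow_atTop two_ne_zero).const_mul_atTop hσ)).mul_const D.toReal
    exact ((this.eventually (gt_mem_nhds (by positivity))).and (eventually_ge_atTop 1)).exists
  set M := 3 + Real.exp (σ * K)
  obtain ⟨θ, hθM, hθ⟩ : ∃ θ, M * √θ * √Υ < ε / 3 ∧ 0 < θ := by
    have : Tendsto (fun θ ↦ M * √θ * √Υ) (𝓝[>] 0) (𝓝 0) := by
      simpa using (((Real.continuous_sqrt.tendsto 0).const_mul M).mul_const √Υ).mono_left
        nhdsWithin_le_nhds
    exact ((this.eventually (gt_mem_nhds (by positivity))).and self_mem_nhdsWithin).exists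
  refine ⟨θ, hθ, fun g hg E hE ↦ ?_⟩
  have hDE : ∫⁻ x in {x | 1 < h x}, ENNReal.ofReal (Real.exp (δ * h x ^ 2)) ∂μ.restrict E ≤ D :=
    lintegral_mono' (Measure.restrict_mono subset_rfl Measure.restrict_le_self) le_rfl
  calc ∫⁻ x in E, ENNReal.ofReal (h x * |g x - 1|) ∂μ
      ≤ ENNReal.ofReal M * ENNReal.ofReal θ ^ (1 / 2 : ℝ) * ENNReal.ofReal Υ ^ (1 / 2 : ℝ) +
          ENNReal.ofReal (Υ / σ) + ENNReal.ofReal (c / (σ * K ^ 2)) * D := by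
        refine (lintegral_mul_abs_sub_one_le_s18 hh.1 hh.2.1
          (entS_anti Measure.restrict_le_self hg) hσ hδ hK).trans ?_
        gcongr
    _ = ENNReal.ofReal (M * √θ * √Υ + Υ / σ + c / (σ * K ^ 2) * D.toReal) := by
        rw [ENNReal.ofReal_add (p := M * √θ * √Υ + Υ / σ) (by positivity) (by positivity),
          ENNReal.ofReal_add (p := M * √θ * √Υ) (by positivity) (by positivity),
          ENNReal.ofReal_mul (p := M * √θ) (by positivity),
          ENNReal.ofReal_mul (p := M) (by positivity),
          ENNReal.ofReal_mul (p := c / (σ * K ^ 2)) (by positivity), ENNReal.ofReal_toReal hD,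
          Real.sqrt_eq_rpow, Real.sqrt_eq_rpow, ENNReal.ofReal_rpow_of_nonneg hθ.le (by norm_num),
          ENNReal.ofReal_rpow_of_nonneg hΥ (by norm_num)]
    _ ≤ ENNReal.ofReal ε := ENNReal.ofReal_le_ofReal (by linarith)

end EntropyEstimates

lemma TotallyBounded.image_of_dist_le {α β γ : Type*} [PseudoMetricSpace β] [PseudoMetricSpace γ]
    {f : α → β} {g : α → γ} {s : Set α} (hg : TotallyBounded (g '' s))
    (hfg : ∀ a ∈ s, ∀ b ∈ s, dist (f a) (f b) ≤ dist (g a) (g b)) : TotallyBounded (f '' s) := by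
  rw [Metric.totallyBounded_iff]
  intro ε hε
  obtain ⟨t, hts, htf, hcover⟩ := Metric.finite_approx_of_totallyBounded hg ε hε
  obtain ⟨u, hus, huf, rfl⟩ := Set.exists_subset_image_finite_and.1 ⟨t, hts, htf, rfl⟩
  refine ⟨f '' u, huf.image f, ?_⟩
  rintro _ ⟨a, ha, rfl⟩
  obtain ⟨_, ⟨b, hb, rfl⟩, hab⟩ := Set.mem_iUnion₂.1 (hcover ⟨a, ha, rfl⟩)
  exact Set.mem_iUnion₂.2 ⟨f b, Set.mem_image_of_mem f hb, (hfg a ha b (hus hb)).trans_lt hab⟩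

theorem ContinuousMap.isCompact_closure_of_equicontinuous {X Y : Type*} [TopologicalSpace X]
    [CompactSpace X] [MetricSpace Y] {S : Set C(X, Y)} {Q : Set Y} (hQ : IsCompact Q)
    (hSQ : ∀ f ∈ S, ∀ x, f x ∈ Q) (hS : Equicontinuous ((↑) : S → X → Y)) :
    IsCompact (closure S) := by
  let e := (ContinuousMap.isometryEquivBoundedOfCompact X Y).toHomeomorph
  have hrange : Set.range (fun u : e '' S ↦ ⇑(u : X →ᵇ Y)) =
      Set.range (fun f : S ↦ ⇑(f : C(X, Y))) := by
    ext; simp [e]; rfl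
  have hS' : Equicontinuous ((↑) : e '' S → X → Y) := by
    rw [equicontinuous_iff_range, hrange]
    exact equicontinuous_iff_range.1 hS
  have := BoundedContinuousFunction.arzela_ascoli Q hQ (e '' S)
    (by rintro _ x ⟨f, hf, rfl⟩; exact hSQ f hf x) hS'
  rwa [← e.image_closure, e.isCompact_image] at this

section GelfandTriple

variable {V H : Type*} [NormedAddCommGroup V] [NormedSpace ℝ V]
  [NormedAddCommGroup H] [InnerProductSpace ℝ H]

lemma dist_innerSL_comp_le (i : V →L[ℝ] H) (w w' : H) :
    dist ((innerSL ℝ w).comp i) ((innerSL ℝ w').comp i) ≤ ‖i‖ * dist w w' := by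
  rw [dist_eq_norm, dist_eq_norm, ← ContinuousLinearMap.sub_comp, ← map_sub, mul_comm]
  exact ((innerSL ℝ (w - w')).opNorm_comp_le i).trans_eq (by rw [innerSL_apply_norm])

/-- A Schauder-type statement: the embedding `H → V*` dual to a compact `i : V → H` is compact. -/
theorem IsCompactOperator.isCompact_closure_image_innerSL_comp {i : V →L[ℝ] H}
    (hi : IsCompactOperator i) (C : ℝ) :
    IsCompact (closure ((fun w : H ↦ (innerSL ℝ w).comp i) '' Metric.closedBall 0 C)) := by
  set K := closure (i '' Metric.closedBall 0 1)
  have hK : IsCompact K := hi.isCompact_closure_image_closedBall 1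
  have : CompactSpace K := isCompact_iff_compactSpace.1 hK
  obtain ⟨R, hR⟩ := hK.isBounded.subset_closedBall 0
  -- `‖J w - J w'‖ ≤ sup_K |⟪w - w', ·⟫|`, and the restrictions `⟪w, ·⟫|_K`, `‖w‖ ≤ C`, form a
  -- relatively compact subset of `C(K, ℝ)` by Arzelà–Ascoli.
  let Ψ : H → C(K, ℝ) := fun w ↦ ⟨fun x ↦ inner ℝ w (x : H), by fun_prop⟩
  have hΨ : TotallyBounded (Ψ '' Metric.closedBall 0 C) := by
    refine (ContinuousMap.isCompact_closure_of_equicontinuous (isCompact_closedBall (0 : ℝ) (C * R))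
      ?_ ?_).totallyBounded.subset subset_closure
    · rintro _ ⟨w, hw, rfl⟩ x
      rw [mem_closedBall_zero_iff] at hw ⊢
      have hx : ‖(x : H)‖ ≤ R := mem_closedBall_zero_iff.1 (hR x.2)
      calc ‖inner ℝ w (x : H)‖ ≤ ‖w‖ * ‖(x : H)‖ := norm_inner_le_norm w x
        _ ≤ C * R := mul_le_mul hw hx (norm_nonneg _) ((norm_nonneg w).trans hw)
    · refine (LipschitzWith.uniformEquicontinuous _ C.toNNReal fun f ↦ ?_).equicontinuous
      obtain ⟨_, ⟨w, hw, rfl⟩⟩ := f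
      refine LipschitzWith.of_dist_le_mul fun x y ↦ ?_
      rw [mem_closedBall_zero_iff] at hw
      calc dist (inner ℝ w (x : H)) (inner ℝ w (y : H)) = ‖inner ℝ w ((x : H) - y)‖ := by
            rw [inner_sub_right, dist_eq_norm]
        _ ≤ ‖w‖ * dist x y :=
            (norm_inner_le_norm _ _).trans_eq (by rw [Subtype.dist_eq, dist_eq_norm])
        _ ≤ C.toNNReal * dist x y := by
            gcongr; exact hw.trans (Real.le_coe_toNNReal C)
  have hdist : ∀ w w' : H,
      dist ((innerSL ℝ w).comp i) ((innerSL ℝ w').comp i) ≤ dist (Ψ w) (Ψ w') := by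
    intro w w'
    rw [dist_eq_norm, ← ContinuousLinearMap.sub_comp, ← map_sub]
    refine ContinuousLinearMap.opNorm_le_of_unit_norm dist_nonneg fun v hv ↦ ?_
    have hv : i v ∈ K := subset_closure ⟨v, by simp [hv], rfl⟩
    simpa [Ψ, inner_sub_left, Real.dist_eq] using
      ContinuousMap.dist_apply_le_dist (f := Ψ w) (g := Ψ w') ⟨i v, hv⟩
  exact ((hΨ.image_of_dist_le fun w _ w' _ ↦ hdist w w').closure).isCompact_of_isClosed
    isClosed_closure

end GelfandTriple

section IteratedIntegral

variable {α β E : Type*} [MeasurableSpace α] [MeasurableSpace β] {μ : Measure α} {ν : Measure β}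
  [SFinite ν] [NormedAddCommGroup E] [NormedSpace ℝ E] {F : α → β → E} {G : α × β → ℝ}

lemma lintegral_enorm_integral_le (hG : Measurable G) (hFG : ∀ᵐ a ∂μ, ∀ b, ‖F a b‖ ≤ G (a, b)) :
    ∫⁻ a, ‖∫ b, F a b ∂ν‖ₑ ∂μ ≤ ∫⁻ q, ENNReal.ofReal (G q) ∂μ.prod ν := by
  rw [lintegral_prod _ hG.ennreal_ofReal.aemeasurable]
  refine lintegral_mono_ae (hFG.mono fun a ha ↦ ?_)
  refine (enorm_integral_le_lintegral_enorm _).trans (lintegral_mono fun b ↦ ?_)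
  rw [← ofReal_norm]
  exact ENNReal.ofReal_le_ofReal (ha b)

lemma integrable_integral_of_norm_le (hF : StronglyMeasurable (Function.uncurry F))
    (hG : Measurable G) (hFG : ∀ᵐ a ∂μ, ∀ b, ‖F a b‖ ≤ G (a, b))
    (hfin : ∫⁻ q, ENNReal.ofReal (G q) ∂μ.prod ν ≠ ∞) : Integrable (fun a ↦ ∫ b, F a b ∂ν) μ :=
  ⟨hF.integral_prod_right.aestronglyMeasurable,
    (lintegral_enorm_integral_le hG hFG).trans_lt hfin.lt_top⟩

lemma norm_integral_integral_le (hG : Measurable G) (hFG : ∀ᵐ a ∂μ, ∀ b, ‖F a b‖ ≤ G (a, b))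
    (hfin : ∫⁻ q, ENNReal.ofReal (G q) ∂μ.prod ν ≠ ∞) :
    ‖∫ a, ∫ b, F a b ∂ν ∂μ‖ ≤ (∫⁻ q, ENNReal.ofReal (G q) ∂μ.prod ν).toReal := by
  refine (norm_integral_le_lintegral_norm _).trans (ENNReal.toReal_mono hfin ?_)
  simpa only [ofReal_norm] using lintegral_enorm_integral_le hG hFG

lemma exists_pos_forall_setLIntegral_prod_univ_lt [SFinite μ] {f : α × β → ℝ≥0∞}
    (hf : Measurable f) (hfin : ∫⁻ q, f q ∂μ.prod ν ≠ ∞) {ε : ℝ≥0∞} (hε : ε ≠ 0) :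
    ∃ d > 0, ∀ s, μ s < d → ∫⁻ q in s ×ˢ Set.univ, f q ∂μ.prod ν < ε := by
  rw [lintegral_prod _ hf.aemeasurable] at hfin
  obtain ⟨d, hd, hs⟩ := exists_pos_setLIntegral_lt_of_measure_lt hfin hε
  refine ⟨d, hd, fun s hμs ↦ ?_⟩
  rw [← Measure.prod_restrict, Measure.restrict_univ, lintegral_prod _ hf.aemeasurable]
  exact hs s hμs

end IteratedIntegral

lemma exists_pos_forall_volume_Ioc_lt {d : ℝ≥0∞} (hd : 0 < d) :
    ∃ η > 0, ∀ a b : ℝ, b - a < η → volume (Set.Ioc a b) < d := by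
  obtain ⟨η, -, hη, hηd⟩ := ENNReal.lt_iff_exists_real_btwn.1 hd
  refine ⟨η, ENNReal.ofReal_pos.1 hη, fun a b hab ↦ ?_⟩
  rw [Real.volume_Ioc]
  exact (ENNReal.ofReal_le_ofReal hab.le).trans_lt hηd

lemma setIntegral_Icc_sub_setIntegral_Icc {E : Type*} [NormedAddCommGroup E] [NormedSpace ℝ E]
    {u : ℝ → E} {a b c : ℝ} (hab : a ≤ b) (hbc : b ≤ c) (hu : IntegrableOn u (Set.Icc a c)) :
    (∫ τ in Set.Icc a c, u τ) - ∫ τ in Set.Icc a b, u τ = ∫ τ in Set.Ioc b c, u τ := by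
  have hdisj : Disjoint (Set.Icc a b) (Set.Ioc b c) :=
    (Set.Iic_disjoint_Ioc le_rfl).mono_left Set.Icc_subset_Iic_self
  rw [sub_eq_iff_eq_add', ← setIntegral_union hdisj measurableSet_Ioc
    (hu.mono_set (Set.Icc_subset_Icc_right hbc))
    (hu.mono_set (Set.Ioc_subset_Icc_self.trans (Set.Icc_subset_Icc_left hab))),
    Set.Icc_union_Ioc_eq_Icc hab hbc]

section Drift

variable {V H Z : Type*} [NormedAddCommGroup V] [NormedSpace ℝ V] [NormedAddCommGroup H]
  [InnerProductSpace ℝ H] {i : V →L[ℝ] H} {T N : ℝ} {γ : ℝ → V → Z → H} {Lγ : ℝ × Z → ℝ}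
  {r : ℝ → V} {φ : ℝ × Z → ℝ}

lemma ae_norm_smul_le
    (hγ_bdd : ∀ᵐ t ∂(volume.restrict (Set.Icc (0:ℝ) T)), ∀ (x : V) (z : Z),
      ‖γ t x z‖ ≤ Lγ (t, z) * (1 + ‖i x‖))
    (hL0 : ∀ q, 0 ≤ Lγ q) (hrN : ∀ t ∈ Set.Icc (0 : ℝ) T, ‖i (r t)‖ ≤ N) {A : Set ℝ}
    (hA : MeasurableSet A) (hAT : A ⊆ Set.Icc 0 T) :
    ∀ᵐ τ ∂volume.restrict A, ∀ z,
      ‖(φ (τ, z) - 1) • γ τ (r τ) z‖ ≤ (1 + N) * (Lγ (τ, z) * |φ (τ, z) - 1|) := by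
  filter_upwards [ae_restrict_of_ae_restrict_of_subset hAT hγ_bdd, ae_restrict_mem hA]
    with τ hγτ hτA z
  rw [norm_smul, Real.norm_eq_abs]
  have := mul_le_mul_of_nonneg_left (add_le_add_left (hrN τ (hAT hτA)) 1) (hL0 (τ, z))
  have := hγτ (r τ) z
  have := abs_nonneg (φ (τ, z) - 1)
  nlinarith

variable [MeasurableSpace V] [MeasurableSpace Z] {ν : Measure Z}

noncomputable def driftPath (ν : Measure Z) (γ : ℝ → V → Z → H) (r : ℝ → V) (φ : ℝ × Z → ℝ)
    (t : ℝ) : H :=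
  ∫ τ in Set.Icc 0 t, ∫ z, (φ (τ, z) - 1) • γ τ (r τ) z ∂ν

/-- The family `R₂` of the paper, embedded in `C([0,T]; V*)`. -/
def driftFamily (i : V →L[ℝ] H) (T : ℝ) (ν : Measure Z) (γ : ℝ → V → Z → H) (N Υ : ℝ) :
    Set C(Set.Icc (0 : ℝ) T, StrongDual ℝ V) :=
  {F | ∃ (r : ℝ → V) (φ : ℝ × Z → ℝ), Measurable r ∧ (∀ t ∈ Set.Icc (0 : ℝ) T, ‖i (r t)‖ ≤ N) ∧
    φ ∈ entS (nuT T ν) Υ ∧ ∀ t : Set.Icc (0 : ℝ) T, F t = (innerSL ℝ (driftPath ν γ r φ t)).comp i}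

lemma nuT_restrict_prod_univ [SFinite ν] {A : Set ℝ} (hAT : A ⊆ Set.Icc 0 T) :
    (nuT T ν).restrict (A ×ˢ Set.univ) = (volume.restrict A).prod ν := by
  rw [nuT, ← Measure.prod_restrict, Measure.restrict_univ, Measure.restrict_restrict_of_subset hAT]

lemma integrableOn_and_norm_setIntegral_le [SFinite ν]
    (hγ_meas : StronglyMeasurable (fun q : ℝ × V × Z => γ q.1 q.2.1 q.2.2))
    (hγ_bdd : ∀ᵐ t ∂(volume.restrict (Set.Icc (0:ℝ) T)), ∀ (x : V) (z : Z),
      ‖γ t x z‖ ≤ Lγ (t, z) * (1 + ‖i x‖))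
    (hL : Measurable Lγ) (hL0 : ∀ q, 0 ≤ Lγ q) (hN : 0 ≤ N) (hr : Measurable r)
    (hrN : ∀ t ∈ Set.Icc (0 : ℝ) T, ‖i (r t)‖ ≤ N) (hφ : Measurable φ) {A : Set ℝ}
    (hA : MeasurableSet A) (hAT : A ⊆ Set.Icc 0 T)
    (hfin : ∫⁻ q in A ×ˢ Set.univ, ENNReal.ofReal (Lγ q * |φ q - 1|) ∂nuT T ν ≠ ∞) :
    IntegrableOn (fun τ ↦ ∫ z, (φ (τ, z) - 1) • γ τ (r τ) z ∂ν) A ∧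
      ‖∫ τ in A, ∫ z, (φ (τ, z) - 1) • γ τ (r τ) z ∂ν‖ ≤
        (1 + N) * (∫⁻ q in A ×ˢ Set.univ, ENNReal.ofReal (Lγ q * |φ q - 1|) ∂nuT T ν).toReal := by
  have hG : Measurable fun q : ℝ × Z ↦ (1 + N) * (Lγ q * |φ q - 1|) := by fun_prop
  have hint : ∫⁻ q, ENNReal.ofReal ((1 + N) * (Lγ q * |φ q - 1|)) ∂(volume.restrict A).prod ν =
      ENNReal.ofReal (1 + N) *
        ∫⁻ q in A ×ˢ Set.univ, ENNReal.ofReal (Lγ q * |φ q - 1|) ∂nuT T ν := by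
    simp_rw [ENNReal.ofReal_mul (by linarith : 0 ≤ 1 + N)]
    rw [lintegral_const_mul _ (by fun_prop), nuT_restrict_prod_univ hAT]
  have hF : StronglyMeasurable (Function.uncurry fun τ z ↦ (φ (τ, z) - 1) • γ τ (r τ) z) :=
    (hφ.sub measurable_const).stronglyMeasurable.smul
      (hγ_meas.comp_measurable (g := fun q : ℝ × Z ↦ (q.1, r q.1, q.2)) (by fun_prop))
  have hfin' := hint ▸ ENNReal.mul_ne_top ENNReal.ofReal_ne_top hfin
  have hbound := ae_norm_smul_le (φ := φ) hγ_bdd hL0 hrN hA hAT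
  refine ⟨integrable_integral_of_norm_le hF hG hbound hfin', ?_⟩
  refine (norm_integral_integral_le hG hbound hfin').trans_eq ?_
  rw [hint, ENNReal.toReal_mul, ENNReal.toReal_ofReal (by linarith)]

lemma norm_driftPath_sub_le [SFinite ν]
    (hγ_meas : StronglyMeasurable (fun q : ℝ × V × Z => γ q.1 q.2.1 q.2.2))
    (hγ_bdd : ∀ᵐ t ∂(volume.restrict (Set.Icc (0:ℝ) T)), ∀ (x : V) (z : Z),
      ‖γ t x z‖ ≤ Lγ (t, z) * (1 + ‖i x‖))
    (hL : Measurable Lγ) (hL0 : ∀ q, 0 ≤ Lγ q) (hN : 0 ≤ N) (hr : Measurable r)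
    (hrN : ∀ t ∈ Set.Icc (0 : ℝ) T, ‖i (r t)‖ ≤ N) (hφ : Measurable φ)
    (hfin : ∫⁻ q, ENNReal.ofReal (Lγ q * |φ q - 1|) ∂nuT T ν ≠ ∞)
    {a b : ℝ} (ha : 0 ≤ a) (hab : a ≤ b) (hb : b ≤ T) :
    ‖driftPath ν γ r φ b - driftPath ν γ r φ a‖ ≤
      (1 + N) * (∫⁻ q in Set.Ioc a b ×ˢ Set.univ,
        ENNReal.ofReal (Lγ q * |φ q - 1|) ∂nuT T ν).toReal := by
  have hfin' : ∀ A : Set ℝ, ∫⁻ q in A ×ˢ Set.univ,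
      ENNReal.ofReal (Lγ q * |φ q - 1|) ∂nuT T ν ≠ ∞ :=
    fun A ↦ ne_top_of_le_ne_top hfin (setLIntegral_le_lintegral _ _)
  rw [driftPath, driftPath, setIntegral_Icc_sub_setIntegral_Icc ha hab
    (integrableOn_and_norm_setIntegral_le hγ_meas hγ_bdd hL hL0 hN hr hrN hφ measurableSet_Icc
      (Set.Icc_subset_Icc_right hb) (hfin' _)).1]
  exact (integrableOn_and_norm_setIntegral_le hγ_meas hγ_bdd hL hL0 hN hr hrN hφ measurableSet_Ioc
    (Set.Ioc_subset_Icc_self.trans (Set.Icc_subset_Icc ha hb)) (hfin' _)).2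

theorem exists_forall_driftFamily_mem_image [SFinite ν]
    (hγ_meas : StronglyMeasurable (fun q : ℝ × V × Z => γ q.1 q.2.1 q.2.2))
    (hγ_bdd : ∀ᵐ t ∂(volume.restrict (Set.Icc (0:ℝ) T)), ∀ (x : V) (z : Z),
      ‖γ t x z‖ ≤ Lγ (t, z) * (1 + ‖i x‖))
    (hL2 : ∫⁻ q, ENNReal.ofReal (Lγ q ^ 2) ∂nuT T ν ≠ ∞) (hH2 : memHp (nuT T ν) 2 Lγ)
    (hN : 0 ≤ N) (Υ : ℝ) :
    ∃ R, ∀ F ∈ driftFamily i T ν γ N Υ, ∀ t,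
      F t ∈ (fun w : H ↦ (innerSL ℝ w).comp i) '' Metric.closedBall 0 R := by
  obtain ⟨C, hC, hbound⟩ := hH2.exists_lintegral_mul_abs_sub_one_le hL2 Υ
  refine ⟨(1 + N) * C.toReal, fun F ⟨r, φ, hr, hrN, hφ, hF⟩ t ↦
    ⟨_, mem_closedBall_zero_iff.2 ?_, (hF t).symm⟩⟩
  have hle : ∀ A : Set ℝ, ∫⁻ q in A ×ˢ Set.univ,
      ENNReal.ofReal (Lγ q * |φ q - 1|) ∂nuT T ν ≤ C :=
    fun A ↦ (setLIntegral_le_lintegral _ _).trans (hbound φ hφ)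
  refine (integrableOn_and_norm_setIntegral_le hγ_meas hγ_bdd hH2.1 hH2.2.1 hN hr hrN hφ.1
    measurableSet_Icc (Set.Icc_subset_Icc_right t.2.2) (ne_top_of_le_ne_top hC (hle _))).2.trans ?_
  exact mul_le_mul_of_nonneg_left (ENNReal.toReal_mono hC (hle _)) (by linarith)

theorem uniformEquicontinuous_driftFamily [SFinite ν]
    (hγ_meas : StronglyMeasurable (fun q : ℝ × V × Z => γ q.1 q.2.1 q.2.2))
    (hγ_bdd : ∀ᵐ t ∂(volume.restrict (Set.Icc (0:ℝ) T)), ∀ (x : V) (z : Z),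
      ‖γ t x z‖ ≤ Lγ (t, z) * (1 + ‖i x‖))
    (hL2 : ∫⁻ q, ENNReal.ofReal (Lγ q ^ 2) ∂nuT T ν ≠ ∞) (hH2 : memHp (nuT T ν) 2 Lγ)
    (hN : 0 ≤ N) {Υ : ℝ} (hΥ : 0 ≤ Υ) :
    UniformEquicontinuous ((↑) : driftFamily i T ν γ N Υ → Set.Icc (0 : ℝ) T → StrongDual ℝ V) := by
  rw [Metric.uniformEquicontinuous_iff]
  intro ε hε
  set c := (‖i‖ + 1) * (1 + N)
  have hc : 0 < c := by positivity
  obtain ⟨C, hC, hbound⟩ := hH2.exists_lintegral_mul_abs_sub_one_le hL2 Υ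
  obtain ⟨θ, hθ, hsmall⟩ := hH2.exists_pos_setLIntegral_mul_abs_sub_one_le hL2 hΥ (div_pos hε hc)
  obtain ⟨d, hd, hd'⟩ := exists_pos_forall_setLIntegral_prod_univ_lt
    (μ := volume.restrict (Set.Icc 0 T)) (hH2.1.pow_const 2).ennreal_ofReal hL2
    (ENNReal.ofReal_pos.2 hθ).ne'
  obtain ⟨η, hη, hη'⟩ := exists_pos_forall_volume_Ioc_lt hd
  have key : ∀ F ∈ driftFamily i T ν γ N Υ, ∀ x y : Set.Icc (0 : ℝ) T, (x : ℝ) ≤ y →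
      (y : ℝ) - x < η → dist (F x) (F y) < ε := by
    rintro F ⟨r, φ, hr, hrN, hφ, hF⟩ x y hxy hxyη
    have hsq : ∫⁻ q in Set.Ioc (x : ℝ) y ×ˢ Set.univ, ENNReal.ofReal (Lγ q ^ 2) ∂nuT T ν ≤
        ENNReal.ofReal θ :=
      (hd' _ ((Measure.restrict_le_self _).trans_lt (hη' x y hxyη))).le
    have hinc := norm_driftPath_sub_le hγ_meas hγ_bdd hH2.1 hH2.2.1 hN hr hrN hφ.1
      (hbound φ hφ |>.trans_lt hC.lt_top).ne x.2.1 hxy y.2.2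
    calc dist (F x) (F y) ≤ ‖i‖ * ‖driftPath ν γ r φ y - driftPath ν γ r φ x‖ := by
          rw [dist_comm, hF, hF, ← dist_eq_norm]
          exact dist_innerSL_comp_le _ _ _
      _ ≤ ‖i‖ * ((1 + N) * (ε / c)) := by
          gcongr
          refine hinc.trans (mul_le_mul_of_nonneg_left ?_ (by linarith))
          exact ENNReal.toReal_le_of_le_ofReal (by positivity) (hsmall φ hφ _ hsq)
      _ < ε := by
          rw [← mul_assoc, mul_div_assoc', div_lt_iff₀ hc]
          nlinarith
  refine ⟨η, hη, fun x y hxy F ↦ ?_⟩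
  rw [Subtype.dist_eq, Real.dist_eq, abs_lt] at hxy
  rcases le_total (x : ℝ) y with h | h
  · exact key F F.2 x y h (by linarith)
  · rw [dist_comm]
    exact key F F.2 y x h (by linarith)

end Drift

theorem statement18_general {V H Z : Type*}
    [NormedAddCommGroup V] [NormedSpace ℝ V]
    [MeasurableSpace V]
    [NormedAddCommGroup H] [InnerProductSpace ℝ H]
    [TopologicalSpace Z] [PolishSpace Z] [LocallyCompactSpace Z]
    [MeasurableSpace Z]
    -- the Gelfand triple: `i : V → H` continuous, dense, injective and compact
    (i : V →L[ℝ] H)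
    (hi_cpt : IsCompactOperator i)
    (T : ℝ)
    (ν : Measure Z) [IsFiniteMeasureOnCompacts ν]
    (γ : ℝ → V → Z → H)
    (hγ_meas : StronglyMeasurable (fun q : ℝ × V × Z => γ q.1 q.2.1 q.2.2))
    (Lγ : ℝ × Z → ℝ)
    (hLγ_L2 : ∫⁻ q, ENNReal.ofReal (Lγ q ^ 2) ∂(nuT T ν) < ∞)
    (hLγ_H2 : memHp (nuT T ν) 2 Lγ)
    -- growth bound on `γ` (hypothesis (H.8))
    (hγ_bdd : ∀ᵐ t ∂(volume.restrict (Set.Icc (0:ℝ) T)), ∀ (x : V) (z : Z),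
      ‖γ t x z‖ ≤ Lγ (t, z) * (1 + ‖i x‖))
    (N Υ : ℝ) (hN : 0 < N) (hΥ : 0 < Υ) :
    IsCompact (closure
      {F : C(Set.Icc (0:ℝ) T, StrongDual ℝ V) |
        ∃ (r : ℝ → V) (φ : ℝ × Z → ℝ),
          Measurable r ∧ (∀ t ∈ Set.Icc (0:ℝ) T, ‖i (r t)‖ ≤ N) ∧
          φ ∈ entS (nuT T ν) Υ ∧
          ∀ t : Set.Icc (0:ℝ) T,
            F t = ((innerSL ℝ
              (∫ τ in Set.Icc (0:ℝ) (t : ℝ),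
                ∫ z, (φ (τ, z) - 1) • γ τ (r τ) z ∂ν)).comp i)}) := by
  obtain ⟨R, hR⟩ := exists_forall_driftFamily_mem_image (i := i) hγ_meas hγ_bdd hLγ_L2.ne hLγ_H2
    hN.le Υ
  exact ContinuousMap.isCompact_closure_of_equicontinuous
    (hi_cpt.isCompact_closure_image_innerSL_comp R) (fun F hF t ↦ subset_closure (hR F hF t))
    (uniformEquicontinuous_driftFamily hγ_meas hγ_bdd hLγ_L2.ne hLγ_H2 hN.le hΥ.le).equicontinuous

/-- the family
`R₂ = { t ↦ ∫₀^t ∫_Z γ(τ, r(τ), z)(φ(τ,z) − 1) ν(dz) dτ : sup_t ‖r(t)‖_H ≤ N, φ ∈ S^Υ }`,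
viewed inside `C([0,T];V*)` via the embedding `H ⊂ V*` of the Gelfand triple, is
relatively compact in `C([0,T];V*)`. -/
theorem statement18 {V H Z : Type*}
    [NormedAddCommGroup V] [NormedSpace ℝ V] [CompleteSpace V]
    [MeasurableSpace V] [BorelSpace V]
    [NormedAddCommGroup H] [InnerProductSpace ℝ H] [CompleteSpace H]
    [TopologicalSpace Z] [PolishSpace Z] [LocallyCompactSpace Z]
    [MeasurableSpace Z] [BorelSpace Z]
    -- the Gelfand triple: `i : V → H` continuous, dense, injective and compact
    (i : V →L[ℝ] H) (hi_inj : Function.Injective i) (hi_dense : DenseRange i)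
    (hi_cpt : IsCompactOperator i)
    (T : ℝ) (hT : 0 < T)
    (ν : Measure Z) [IsFiniteMeasureOnCompacts ν]
    (γ : ℝ → V → Z → H)
    (hγ_meas : StronglyMeasurable (fun q : ℝ × V × Z => γ q.1 q.2.1 q.2.2))
    (Lγ : ℝ × Z → ℝ)
    (hLγ_L2 : ∫⁻ q, ENNReal.ofReal (Lγ q ^ 2) ∂(nuT T ν) < ∞)
    (hLγ_H2 : memHp (nuT T ν) 2 Lγ)
    -- growth bound on `γ` (hypothesis (H.8))
    (hγ_bdd : ∀ᵐ t ∂(volume.restrict (Set.Icc (0:ℝ) T)), ∀ (x : V) (z : Z),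
      ‖γ t x z‖ ≤ Lγ (t, z) * (1 + ‖i x‖))
    (N Υ : ℝ) (hN : 0 < N) (hΥ : 0 < Υ) :
    IsCompact (closure
      {F : C(Set.Icc (0:ℝ) T, StrongDual ℝ V) |
        ∃ (r : ℝ → V) (φ : ℝ × Z → ℝ),
          Measurable r ∧ (∀ t ∈ Set.Icc (0:ℝ) T, ‖i (r t)‖ ≤ N) ∧
          φ ∈ entS (nuT T ν) Υ ∧
          ∀ t : Set.Icc (0:ℝ) T,
            F t = ((innerSL ℝ
              (∫ τ in Set.Icc (0:ℝ) (t : ℝ),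
                ∫ z, (φ (τ, z) - 1) • γ τ (r τ) z ∂ν)).comp i)}) :=
  statement18_general i hi_cpt T ν γ hγ_meas Lγ hLγ_L2 hLγ_H2 hγ_bdd N Υ hN hΥ
end
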